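/- arXiv:math/0602291 — 5 statements merged into one kernel-verified Lean document; each statement's English description precedes it below -/
import Mathlib

section
/- Let k ≥ 2 be an integer and let f : (0,∞) → (0,∞) be a monotone non-increasing function such that limsup_{x→∞} f(x)^{1/x} < 1/(2k-1)^k. Then there exists a neighborhood U of the point ℒ* = (1/k, …, 1/k) in the open simplex Δ_k such that for every ℒ ∈ U one has P_f(ℒ) ≤ C_f(ℒ) < ∞. -/
/-!
If every edge length is at least `ε`, then `ℓ_ℒ(w) ≥ ε·n` where `n` is the word length of a
shortest representative of `w`, and there are at most `2(2k-1)^n` reduced words of length `n`.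
The limsup hypothesis gives `f(x) ≤ ρ^x` eventually for some `ρ` with `(2k-1)·ρ^{1/k} < 1`; by
continuity `(2k-1)·ρ^ε < 1` still holds for some `ε < 1/k`, and on the neighbourhood of `ℒ*`
where all edge lengths exceed `ε` the series `C_f` is dominated by a convergent geometric series.
Primitive elements are nontrivial, so `P_f` is a subseries of `C_f`.
-/

open Filter Topology
open scoped ENNReal

namespace McShane

/-- The ℒ-weighted length of the freely reduced form of `g`: the sum of `L i`
over all occurrences of `aᵢ^{±1}` in the reduced word of `g`. -/
noncomputable def wlen {k : ℕ} (L : Fin k → ℝ) (g : FreeGroup (Fin k)) : ℝ :=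
  ((FreeGroup.toWord g).map fun x => L x.1).sum

/-- The hyperbolic length of a conjugacy class: the infimum of the ℒ-weighted
lengths of its representatives. For positive edge lengths this equals
`∑ mᵢ·L i` where `mᵢ` counts occurrences of `aᵢ^{±1}` in the cyclically reduced form. -/
noncomputable def hlen {k : ℕ} (L : Fin k → ℝ) (c : ConjClasses (FreeGroup (Fin k))) : ℝ :=
  sInf (wlen L '' c.carrier)

/-- The open simplex `Δ_k` of volume-one metric structures on the wedge of `k` circles. -/
def simplex (k : ℕ) : Set (Fin k → ℝ) :=
  {L | (∀ i, 0 < L i) ∧ ∑ i, L i = 1}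

/-- The barycentric point `ℒ* = (1/k, …, 1/k)`. -/
noncomputable def Lstar (k : ℕ) : Fin k → ℝ := fun _ => 1 / k

/-- `g` is primitive iff it belongs to some free basis of the free group,
equivalently it is the image of a basis element under an automorphism. -/
def IsPrimitive {k : ℕ} (g : FreeGroup (Fin k)) : Prop :=
  ∃ (e : FreeGroup (Fin k) ≃* FreeGroup (Fin k)) (i : Fin k), e (FreeGroup.of i) = g

/-- `C_f(ℒ) = ∑_{w ∈ 𝒞_k} f(ℓ_ℒ(w))`, the sum over all nontrivial conjugacy classes. -/
noncomputable def Cf {k : ℕ} (f : ℝ → ℝ) (L : Fin k → ℝ) : ℝ≥0∞ :=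
  ∑' c : {c : ConjClasses (FreeGroup (Fin k)) // c ≠ 1}, ENNReal.ofReal (f (hlen L c.1))

/-- `P_f(ℒ) = ∑_{w ∈ 𝒫_k} f(ℓ_ℒ(w))`, the sum over conjugacy classes of primitive elements. -/
noncomputable def Pf {k : ℕ} (f : ℝ → ℝ) (L : Fin k → ℝ) : ℝ≥0∞ :=
  ∑' c : {c : ConjClasses (FreeGroup (Fin k)) // ∃ g, IsPrimitive g ∧ ConjClasses.mk g = c},
    ENNReal.ofReal (f (hlen L c.1))

section ReducedWords

variable {α : Type*} [Fintype α] [DecidableEq α]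

def prefixLetters : List (α × Bool) → Finset (α × Bool)
  | [] => Finset.univ
  | b :: _ => Finset.univ.erase (b.1, !b.2)

variable (α) in
def reducedWords : ℕ → Finset (List (α × Bool))
  | 0 => {[]}
  | n + 1 => (reducedWords n).biUnion fun L => (prefixLetters L).image (· :: L)

theorem length_of_mem_reducedWords {n : ℕ} {L : List (α × Bool)}
    (hL : L ∈ reducedWords α n) : L.length = n := by
  induction n generalizing L with
  | zero => simpa [reducedWords] using hL
  | succ n ih =>
    obtain ⟨L', hL', hL⟩ := Finset.mem_biUnion.1 hL
    obtain ⟨a, -, rfl⟩ := Finset.mem_image.1 hL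
    simp [ih hL']

theorem mem_reducedWords_length {L : List (α × Bool)} (hL : FreeGroup.IsReduced L) :
    L ∈ reducedWords α L.length := by
  induction L with
  | nil => simp [reducedWords]
  | cons a L ih =>
    refine Finset.mem_biUnion.2
      ⟨L, ih (hL.infix ⟨[a], [], by simp⟩), Finset.mem_image.2 ⟨a, ?_, rfl⟩⟩
    cases L with
    | nil => exact Finset.mem_univ a
    | cons b L =>
      refine Finset.mem_erase.2 ⟨?_, Finset.mem_univ a⟩
      rintro rfl
      simp [FreeGroup.isReduced_cons_cons] at hL

theorem card_prefixLetters_le {L : List (α × Bool)} (hL : L ≠ []) :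
    (prefixLetters L).card ≤ 2 * Fintype.card α - 1 := by
  obtain ⟨b, L, rfl⟩ := List.exists_cons_of_ne_nil hL
  simp [prefixLetters, Finset.card_erase_of_mem, mul_comm]

theorem card_reducedWords_succ_le (n : ℕ) :
    (reducedWords α (n + 1)).card ≤ ∑ L ∈ reducedWords α n, (prefixLetters L).card :=
  Finset.card_biUnion_le.trans (Finset.sum_le_sum fun _ _ => Finset.card_image_le)

theorem card_reducedWords_le :
    ∀ n, (reducedWords α n).card ≤ 2 * (2 * Fintype.card α - 1) ^ n
  | 0 => by simp [reducedWords]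
  | 1 => (card_reducedWords_succ_le 0).trans (by simp [reducedWords, prefixLetters]; omega)
  | n + 2 => calc
    _ ≤ ∑ L ∈ reducedWords α (n + 1), (prefixLetters L).card :=
      card_reducedWords_succ_le (n + 1)
    _ ≤ ∑ _L ∈ reducedWords α (n + 1), (2 * Fintype.card α - 1) :=
      Finset.sum_le_sum fun L hL => card_prefixLetters_le <|
        List.ne_nil_of_length_pos (by rw [length_of_mem_reducedWords hL]; omega)
    _ = (reducedWords α (n + 1)).card * (2 * Fintype.card α - 1) := by
      rw [Finset.sum_const, smul_eq_mul]
    _ ≤ 2 * (2 * Fintype.card α - 1) ^ (n + 1) * (2 * Fintype.card α - 1) :=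
      Nat.mul_le_mul_right _ (card_reducedWords_le (n + 1))
    _ = 2 * (2 * Fintype.card α - 1) ^ (n + 2) := by ring

theorem encard_setOf_length_toWord_le (n : ℕ) :
    {g : FreeGroup α | g.toWord.length = n}.encard ≤
      ((2 * (2 * Fintype.card α - 1) ^ n : ℕ) : ℕ∞) :=
  calc {g : FreeGroup α | g.toWord.length = n}.encard
      ≤ (reducedWords α n : Set (List (α × Bool))).encard :=
        Set.encard_le_encard_of_injOn
          (fun g hg => hg ▸ mem_reducedWords_length FreeGroup.isReduced_toWord)
          FreeGroup.toWord_injective.injOn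
    _ ≤ ((2 * (2 * Fintype.card α - 1) ^ n : ℕ) : ℕ∞) := by
      rw [Set.encard_coe_eq_coe_finsetCard]
      exact_mod_cast card_reducedWords_le n

theorem tsum_length_toWord_le (φ : ℕ → ℝ≥0∞) :
    ∑' g : FreeGroup α, φ g.toWord.length ≤
      ∑' n, ((2 * (2 * Fintype.card α - 1) ^ n : ℕ) : ℝ≥0∞) * φ n := by
  rw [← ENNReal.tsum_fiberwise _ fun g : FreeGroup α => g.toWord.length]
  refine ENNReal.tsum_le_tsum fun n => ?_
  calc ∑' g : (fun g : FreeGroup α => g.toWord.length) ⁻¹' {n}, φ g.1.toWord.length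
      = ∑' _ : {g : FreeGroup α | g.toWord.length = n}, φ n :=
        tsum_congr fun g => congrArg φ g.2
    _ = {g : FreeGroup α | g.toWord.length = n}.encard * φ n := ENNReal.tsum_set_const _ _
    _ ≤ _ := by
      gcongr
      exact_mod_cast encard_setOf_length_toWord_le n

end ReducedWords

section ShortestRepresentative

variable {α : Type*} [DecidableEq α]

noncomputable def shortestRep (c : ConjClasses (FreeGroup α)) : FreeGroup α :=
  Function.argminOn (fun g => g.toWord.length) c.carrier <|
    c.exists_rep.imp fun _ => ConjClasses.mem_carrier_iff_mk_eq.2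

theorem shortestRep_mem_carrier (c : ConjClasses (FreeGroup α)) : shortestRep c ∈ c.carrier := by
  unfold shortestRep
  exact Function.argminOn_mem _ _ _

theorem mk_shortestRep (c : ConjClasses (FreeGroup α)) : ConjClasses.mk (shortestRep c) = c :=
  ConjClasses.mem_carrier_iff_mk_eq.1 (shortestRep_mem_carrier c)

theorem length_shortestRep_le {c : ConjClasses (FreeGroup α)} {g : FreeGroup α}
    (hg : g ∈ c.carrier) : (shortestRep c).toWord.length ≤ g.toWord.length := by
  unfold shortestRep
  exact Function.argminOn_le (fun g : FreeGroup α => g.toWord.length) _ hg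

theorem shortestRep_injective : Function.Injective (shortestRep (α := α)) :=
  Function.LeftInverse.injective mk_shortestRep

theorem length_shortestRep_pos {c : ConjClasses (FreeGroup α)} (hc : c ≠ 1) :
    0 < (shortestRep c).toWord.length := by
  refine List.length_pos_of_ne_nil fun h => hc ?_
  rw [← mk_shortestRep c, FreeGroup.toWord_eq_nil_iff.1 h, ConjClasses.one_eq_mk_one]

end ShortestRepresentative

section Lengths

variable {k : ℕ} {L : Fin k → ℝ} {ε : ℝ}

theorem mul_length_toWord_le_wlen (hL : ∀ i, ε ≤ L i) (g : FreeGroup (Fin k)) :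
    ε * g.toWord.length ≤ wlen L g := by
  have := List.card_nsmul_le_sum (g.toWord.map fun x => L x.1) ε (by simp [hL])
  simpa [wlen, mul_comm] using this

theorem mul_length_shortestRep_le_hlen (hε : 0 ≤ ε) (hL : ∀ i, ε ≤ L i)
    (c : ConjClasses (FreeGroup (Fin k))) :
    ε * (shortestRep c).toWord.length ≤ hlen L c := by
  refine le_csInf ⟨_, Set.mem_image_of_mem _ (shortestRep_mem_carrier c)⟩ ?_
  rintro _ ⟨g, hg, rfl⟩
  calc ε * (shortestRep c).toWord.length ≤ ε * g.toWord.length := by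
        gcongr
        exact length_shortestRep_le hg
    _ ≤ wlen L g := mul_length_toWord_le_wlen hL g

theorem Cf_le_tsum {f : ℝ → ℝ} (hf : AntitoneOn f (Set.Ioi 0)) (hε : 0 < ε)
    (hL : ∀ i, ε ≤ L i) :
    Cf f L ≤ ∑' n : ℕ, ENNReal.ofReal (2 * (((2 * k - 1 : ℕ) : ℝ) ^ n * f (ε * n))) :=
  calc
    Cf f L ≤ ∑' c : {c : ConjClasses (FreeGroup (Fin k)) // c ≠ 1},
        ENNReal.ofReal (f (ε * (shortestRep c.1).toWord.length)) := by
      refine ENNReal.tsum_le_tsum fun c => ENNReal.ofReal_le_ofReal ?_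
      have hpos : 0 < ε * (shortestRep c.1).toWord.length :=
        mul_pos hε (by exact_mod_cast length_shortestRep_pos c.2)
      have hle := mul_length_shortestRep_le_hlen hε.le hL c.1
      exact hf hpos (hpos.trans_le hle) hle
    _ ≤ ∑' g : FreeGroup (Fin k), ENNReal.ofReal (f (ε * g.toWord.length)) :=
      ENNReal.tsum_comp_le_tsum_of_injective (shortestRep_injective.comp Subtype.val_injective)
        fun g => ENNReal.ofReal (f (ε * g.toWord.length))
    _ ≤ ∑' n : ℕ,
        ((2 * (2 * Fintype.card (Fin k) - 1) ^ n : ℕ) : ℝ≥0∞) * ENNReal.ofReal (f (ε * n)) :=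
      tsum_length_toWord_le fun n => ENNReal.ofReal (f (ε * n))
    _ = _ := tsum_congr fun n => by
      rw [← mul_assoc, ENNReal.ofReal_mul (by positivity), Fintype.card_fin]
      norm_cast

theorem IsPrimitive.ne_one {g : FreeGroup (Fin k)} (hg : IsPrimitive g) : g ≠ 1 := by
  obtain ⟨e, i, rfl⟩ := hg
  exact (map_ne_one_iff e e.injective).2 (FreeGroup.of_ne_one i)

theorem Pf_le_Cf (f : ℝ → ℝ) (L : Fin k → ℝ) : Pf f L ≤ Cf f L := by
  have hne : ∀ c : ConjClasses (FreeGroup (Fin k)),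
      (∃ g, IsPrimitive g ∧ ConjClasses.mk g = c) → c ≠ 1 := by
    rintro _ ⟨g, hg, rfl⟩
    rw [ne_eq, ConjClasses.one_eq_mk_one, ConjClasses.mk_eq_mk_iff_isConj, isConj_one_left]
    exact hg.ne_one
  exact ENNReal.tsum_comp_le_tsum_of_injective (Subtype.impEmbedding _ _ hne).injective
    fun c => ENNReal.ofReal (f (hlen L c.1))

end Lengths

section Analysis

variable {f : ℝ → ℝ}

theorem isBoundedUnder_rpow_one_div (hf_pos : ∀ x > 0, 0 < f x)
    (hf_anti : AntitoneOn f (Set.Ioi 0)) :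
    IsBoundedUnder (· ≤ ·) atTop fun x => f x ^ (1 / x) := by
  refine isBoundedUnder_of_eventually_le (a := max 1 (f 1)) ?_
  filter_upwards [eventually_ge_atTop 1] with x hx
  have hx0 : 0 < x := one_pos.trans_le hx
  rcases le_or_gt (f x) 1 with h | h
  · exact le_max_of_le_left (Real.rpow_le_one (hf_pos x hx0).le h (by positivity))
  · refine le_max_of_le_right ?_
    calc f x ^ (1 / x) ≤ f x ^ (1 : ℝ) :=
          Real.rpow_le_rpow_of_exponent_le h.le ((div_le_one hx0).2 hx)
      _ ≤ f 1 := by rw [Real.rpow_one]; exact hf_anti (Set.mem_Ioi.2 one_pos) hx0 hx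

theorem eventually_le_rpow_of_limsup_lt (hf_pos : ∀ x > 0, 0 < f x)
    (hf_anti : AntitoneOn f (Set.Ioi 0)) {ρ : ℝ}
    (h : limsup (fun x => f x ^ (1 / x)) atTop < ρ) : ∀ᶠ x in atTop, f x ≤ ρ ^ x := by
  filter_upwards [eventually_lt_of_limsup_lt h (isBoundedUnder_rpow_one_div hf_pos hf_anti),
    eventually_gt_atTop 0] with x hx hx0
  have hfx := (hf_pos x hx0).le
  calc f x = (f x ^ (1 / x)) ^ x := by
        rw [← Real.rpow_mul hfx, one_div_mul_cancel hx0.ne', Real.rpow_one]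
    _ ≤ ρ ^ x := Real.rpow_le_rpow (Real.rpow_nonneg hfx _) hx.le hx0.le

theorem summable_pow_mul_of_eventually_le_rpow {ρ ε b : ℝ} (hρ : 0 ≤ ρ) (hε : 0 < ε)
    (hb : 0 ≤ b) (hbρ : b * ρ ^ ε < 1) (hf_nonneg : ∀ᶠ x in atTop, 0 ≤ f x)
    (hf : ∀ᶠ x in atTop, f x ≤ ρ ^ x) : Summable fun n : ℕ => b ^ n * f (ε * n) := by
  refine (summable_geometric_of_lt_one (by positivity) hbρ).of_norm_bounded_eventually_nat ?_
  have hεn : Tendsto (fun n : ℕ => ε * n) atTop atTop :=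
    tendsto_natCast_atTop_atTop.const_mul_atTop hε
  filter_upwards [hεn.eventually hf_nonneg, hεn.eventually hf] with n h0 hn
  rw [Real.norm_of_nonneg (mul_nonneg (pow_nonneg hb n) h0), mul_pow]
  gcongr
  rwa [Real.rpow_mul hρ, Real.rpow_natCast] at hn

theorem mul_rpow_inv_natCast_lt_one {ρ b : ℝ} {n : ℕ} (hn : n ≠ 0) (hρ : 0 ≤ ρ)
    (hb : 0 < b) (h : ρ < 1 / b ^ n) : b * ρ ^ (n⁻¹ : ℝ) < 1 := calc
  b * ρ ^ (n⁻¹ : ℝ) < b * ((1 / b) ^ n) ^ (n⁻¹ : ℝ) := by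
    rw [div_pow, one_pow]
    gcongr
  _ = 1 := by rw [Real.pow_rpow_inv_natCast (by positivity) hn, mul_one_div_cancel hb.ne']

theorem exists_mem_Ioo_mul_rpow_lt_one {ρ b t : ℝ} (hρ : 0 < ρ) (ht : 0 < t)
    (h : b * ρ ^ t < 1) : ∃ ε ∈ Set.Ioo 0 t, b * ρ ^ ε < 1 := by
  have hcont : ∀ᶠ ε in 𝓝 t, b * ρ ^ ε < 1 :=
    (continuousAt_const.mul (Real.continuousAt_const_rpow hρ.ne')).eventually_lt
      continuousAt_const h
  obtain ⟨ε, hε, hεt⟩ :=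
    ((hcont.filter_mono nhdsWithin_le_nhds).and (Ioo_mem_nhdsLT ht)).exists
  exact ⟨ε, hεt, hε⟩

end Analysis

/-- Theorem A(a): if `f` is positive, non-increasing on `(0,∞)` and
`limsup_{x→∞} f(x)^{1/x} < 1/(2k-1)^k`, then there is a neighborhood `U` of `ℒ*`
in `Δ_k` on which `P_f ≤ C_f < ∞`. -/
theorem mcshane_stmt0 (k : ℕ) (hk : 2 ≤ k) (f : ℝ → ℝ)
    (hf_pos : ∀ x > (0:ℝ), 0 < f x)
    (hf_anti : AntitoneOn f (Set.Ioi 0))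
    (hf_limsup : limsup (fun x : ℝ => f x ^ (1 / x)) atTop < 1 / (2 * (k:ℝ) - 1) ^ k) :
    ∃ U ⊆ simplex k, U ∈ 𝓝[simplex k] (Lstar k) ∧
      ∀ L ∈ U, Pf f L ≤ Cf f L ∧ Cf f L < ⊤ := by
  have hb : ((2 * k - 1 : ℕ) : ℝ) = 2 * k - 1 := by
    rw [Nat.cast_sub (by omega)]; push_cast; ring
  have hb0 : (0 : ℝ) < 2 * k - 1 := by rw [← hb]; exact_mod_cast (by omega : 0 < 2 * k - 1)
  obtain ⟨ρ, hρ, hρB⟩ := exists_between (max_lt hf_limsup (by positivity))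
  obtain ⟨hρlim, hρ0⟩ := max_lt_iff.1 hρ
  obtain ⟨ε, ⟨hε0, hεk⟩, hερ⟩ := exists_mem_Ioo_mul_rpow_lt_one hρ0 (by positivity)
    (mul_rpow_inv_natCast_lt_one (by omega) hρ0.le hb0 hρB)
  have hU : {L : Fin k → ℝ | ∀ i, ε < L i} ∈ 𝓝 (Lstar k) := by
    simpa [Set.pi, Lstar] using set_pi_mem_nhds Set.finite_univ fun i _ =>
      Ioi_mem_nhds (show ε < Lstar k i by simpa [Lstar] using hεk)
  refine ⟨simplex k ∩ {L | ∀ i, ε < L i}, Set.inter_subset_left, inter_mem_nhdsWithin _ hU,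
    fun L hL => ⟨Pf_le_Cf f L, ?_⟩⟩
  refine (Cf_le_tsum hf_anti hε0 fun i => (hL.2 i).le).trans_lt (Summable.tsum_ofReal_lt_top ?_)
  refine (summable_pow_mul_of_eventually_le_rpow hρ0.le hε0 (by positivity) (by rwa [hb])
    ?_ (eventually_le_rpow_of_limsup_lt hf_pos hf_anti hρlim)).mul_left 2
  filter_upwards [eventually_gt_atTop 0] with x hx using (hf_pos x hx).le

end McShane
end

section
/- Let k ≥ 2 and let f : (0,∞) → (0,∞) be a monotone decreasing function that is strictly convex on (0,∞) and satisfies limsup_{x→∞} f(x)^{1/x} < 1/(2k-1)^k. Then there exists a convex neighborhood U of ℒ* = (1/k,…,1/k) in Δ_k such that 0 < P_f(ℒ) < C_f(ℒ) < ∞ for all ℒ ∈ U and both C_f and P_f are strictly convex functions on U; in particular neither C_f nor P_f is constant on U. -/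
/-!
Pick `ρ` strictly between the limsup and `(2k-1)^(-k)`, so that `f x ≤ ρ^x` eventually, and
`θ < 1/k` so close to `1/k` that `(2k-1)ρ^θ < 1`. On the part `U` of `Δ_k` where every
`ℒ(aᵢ) > θ`, the length of a nontrivial class is at least `θ` times the word length of its shortest
representatives, and there are at most `2k(2k-1)^n` reduced words of length `n`, so both series are
dominated by a geometric one.

Each `ℓ_ℒ(w)` is an infimum of linear functions of `ℒ`, hence concave, so `f ∘ ℓ_ℒ(w)` is convex
because `f` is convex and decreasing. The class of `aᵢ` contributes `f (ℒ(aᵢ))`, strictly convex in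
`ℒ(aᵢ)`, and this makes both sums strictly convex. Finally `P_f < C_f` because `a₁²` is nontrivial
but not primitive: a primitive element is sent to `1` by some homomorphism `F_k → ℤ/2`, a square
to `0`.
-/

open Filter Topology
open scoped ENNReal

open Finset

theorem ConjClasses.mk_eq_one_iff {α : Type*} [Monoid α] {a : α} :
    ConjClasses.mk a = 1 ↔ a = 1 := by
  rw [ConjClasses.one_eq_mk_one, ConjClasses.mk_eq_mk_iff_isConj, isConj_one_left]

namespace List

variable {α : Type*} [Fintype α] [DecidableEq α] (R : α → α → Prop) [DecidableRel R]

/-- The lists `l` of length `n` such that `a :: l` is an `R`-chain. -/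
def chainsFrom : α → ℕ → Finset (List α)
  | _, 0 => {[]}
  | a, n + 1 => ({b | R a b} : Finset α).biUnion fun b => (chainsFrom b n).image (b :: ·)

theorem mem_chainsFrom : ∀ {a : α} {l : List α}, (a :: l).IsChain R → l ∈ chainsFrom R a l.length
  | _, [], _ => by simp [chainsFrom]
  | _, b :: l, h => by
    rw [isChain_cons_cons] at h
    simp only [chainsFrom, length_cons, Finset.mem_biUnion, Finset.mem_filter, Finset.mem_univ,
      true_and, Finset.mem_image]
    exact ⟨b, h.1, l, mem_chainsFrom h.2, rfl⟩

theorem card_chainsFrom_le {d : ℕ} (hd : ∀ a, #{b | R a b} ≤ d) (a : α) (n : ℕ) :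
    #(chainsFrom R a n) ≤ d ^ n := by
  induction n generalizing a with
  | zero => simp [chainsFrom]
  | succ n ih =>
    calc #(chainsFrom R a (n + 1))
        ≤ ∑ b ∈ {b | R a b}, #((chainsFrom R b n).image (b :: ·)) := card_biUnion_le
      _ ≤ ∑ _b ∈ {b | R a b}, d ^ n := Finset.sum_le_sum fun b _ => card_image_le.trans (ih b)
      _ ≤ d ^ (n + 1) := by
        rw [sum_const, smul_eq_mul, pow_succ']
        exact Nat.mul_le_mul_right _ (hd a)

end List

namespace FreeGroup

theorem exists_shortest_rep {α : Type*} [DecidableEq α] (c : ConjClasses (FreeGroup α)) :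
    ∃ g, ConjClasses.mk g = c ∧ ∀ h, ConjClasses.mk h = c → g.norm ≤ h.norm := by
  obtain ⟨g₀, hg₀⟩ := ConjClasses.exists_rep c
  obtain ⟨g, hg, hmin⟩ := (InvImage.wf norm wellFounded_lt).has_min {g | ConjClasses.mk g = c}
    ⟨g₀, hg₀⟩
  exact ⟨g, hg, fun h hh => not_lt.mp (hmin h hh)⟩

variable {α : Type*} [Fintype α] [DecidableEq α]

theorem card_filter_isReduced_pair (a : α × Bool) :
    #{b : α × Bool | a.1 = b.1 → a.2 = b.2} = 2 * Fintype.card α - 1 := by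
  have : ({b : α × Bool | a.1 = b.1 → a.2 = b.2} : Finset _) = univ.erase (a.1, !a.2) := by
    ext ⟨x, s⟩
    rcases a with ⟨y, t⟩
    by_cases h : y = x
    · subst h; cases s <;> cases t <;> simp
    · simp [h, Ne.symm h]
  rw [this, card_erase_of_mem (mem_univ _), card_univ, Fintype.card_prod, Fintype.card_bool,
    mul_comm]

variable (α) in
def reducedWords (n : ℕ) : Finset (List (α × Bool)) :=
  univ.biUnion fun a => List.chainsFrom (fun a b : α × Bool => a.1 = b.1 → a.2 = b.2) a n

theorem card_reducedWords_le (n : ℕ) :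
    #(reducedWords α n) ≤ 2 * Fintype.card α * (2 * Fintype.card α - 1) ^ n := by
  calc #(reducedWords α n) ≤ ∑ a : α × Bool, #(List.chainsFrom _ a n) := card_biUnion_le
    _ ≤ ∑ _a : α × Bool, (2 * Fintype.card α - 1) ^ n := sum_le_sum fun a _ =>
        List.card_chainsFrom_le _ (fun a => (card_filter_isReduced_pair a).le) a n
    _ = _ := by simp [Fintype.card_prod, mul_comm]

theorem toWord_mem_reducedWords [Nonempty α] (g : FreeGroup α) :
    g.toWord ∈ reducedWords α g.norm := by
  have hred : IsReduced g.toWord := isReduced_toWord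
  simp only [reducedWords, mem_biUnion, mem_univ, true_and, norm]
  rcases h : g.toWord with _ | ⟨b, l⟩
  · exact ⟨Classical.arbitrary _, by simp [List.chainsFrom]⟩
  · rw [h] at hred
    exact ⟨b, List.mem_chainsFrom _ (List.IsChain.cons_cons (fun _ => rfl) hred)⟩

theorem summable_comp_norm [Nonempty α] {F : ℕ → ℝ}
    (hF : Summable fun n => (2 * (Fintype.card α : ℝ) - 1) ^ n * ‖F n‖) :
    Summable fun g : FreeGroup α => F g.norm := by
  let e : FreeGroup α → Σ n, reducedWords α n := fun g =>
    ⟨g.norm, g.toWord, toWord_mem_reducedWords g⟩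
  have he : e.Injective := fun g h hgh =>
    toWord_injective (congrArg (fun p => (p.2 : List (α × Bool))) hgh)
  have hcard : ((2 * Fintype.card α - 1 : ℕ) : ℝ) = 2 * (Fintype.card α : ℝ) - 1 := by
    have : 1 ≤ 2 * Fintype.card α := by have := Fintype.card_pos (α := α); omega
    push_cast [this]
    ring
  have hsigma : Summable fun p : Σ n, reducedWords α n => ‖F p.1‖ := by
    refine (summable_sigma_of_nonneg fun _ => norm_nonneg _).2
      ⟨fun _ => (hasSum_fintype _).summable, ?_⟩
    refine .of_nonneg_of_le (fun _ => tsum_nonneg fun _ => norm_nonneg _) (fun n => ?_)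
      (hF.mul_left (2 * (Fintype.card α : ℝ)))
    have hbound : (#(reducedWords α n) : ℝ) ≤
        2 * Fintype.card α * (2 * Fintype.card α - 1) ^ n := by
      rw [← hcard]
      exact_mod_cast card_reducedWords_le n
    rw [tsum_fintype]
    change ∑ _w : reducedWords α n, ‖F n‖ ≤ _
    rw [sum_const, card_univ, Fintype.card_coe, nsmul_eq_mul, ← mul_assoc]
    exact mul_le_mul_of_nonneg_right hbound (norm_nonneg _)
  have := hsigma.comp_injective he
  exact .of_norm this

end FreeGroup

theorem ConvexOn.comp_concaveOn_of_mapsTo {E : Type*} [AddCommGroup E] [Module ℝ E] {s : Set E}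
    {t : Set ℝ} {g : ℝ → ℝ} {h : E → ℝ} (hg : ConvexOn ℝ t g) (hg' : AntitoneOn g t)
    (hh : ConcaveOn ℝ s h) (hst : Set.MapsTo h s t) : ConvexOn ℝ s (g ∘ h) :=
  ⟨hh.1, fun _ hx _ hy _ _ ha hb hab =>
    (hg' (hg.1 (hst hx) (hst hy) ha hb hab) (hst (hh.1 hx hy ha hb hab))
      (hh.2 hx hy ha hb hab)).trans (hg.2 (hst hx) (hst hy) ha hb hab)⟩

theorem strictConvexOn_tsum {ι E : Type*} [AddCommGroup E] [Module ℝ E] {s : Set E}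
    {F : ι → E → ℝ} (hs : Convex ℝ s) (hF : ∀ i, ConvexOn ℝ s (F i))
    (hsum : ∀ x ∈ s, Summable fun i => F i x)
    (hstrict : ∀ x ∈ s, ∀ y ∈ s, x ≠ y → ∃ i, ∀ a b : ℝ, 0 < a → 0 < b → a + b = 1 →
      F i (a • x + b • y) < a * F i x + b * F i y) :
    StrictConvexOn ℝ s fun x => ∑' i, F i x := by
  refine ⟨hs, fun x hx y hy hxy a b ha hb hab => ?_⟩
  obtain ⟨i, hi⟩ := hstrict x hx y hy hxy
  have hsx := (hsum x hx).mul_left a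
  have hsy := (hsum y hy).mul_left b
  calc ∑' j, F j (a • x + b • y) < ∑' j, (a * F j x + b * F j y) :=
        Summable.tsum_lt_tsum (fun j => (hF j).2 hx hy ha.le hb.le hab) (hi a b ha hb hab)
          (hsum _ (hs hx hy ha.le hb.le hab)) (hsx.add hsy)
    _ = a • ∑' j, F j x + b • ∑' j, F j y := by
        rw [hsx.tsum_add hsy, tsum_mul_left, tsum_mul_left, smul_eq_mul, smul_eq_mul]

theorem ENNReal.tsum_subtype_lt_tsum_subtype {β : Type*} (g : β → ℝ≥0∞) {s t : Set β}
    (hst : s ⊆ t) {b : β} (hbt : b ∈ t) (hbs : b ∉ s) (hb : g b ≠ 0)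
    (hs : ∑' x : s, g x ≠ ⊤) : ∑' x : s, g x < ∑' x : t, g x := by
  simp only [_root_.tsum_subtype] at hs ⊢
  refine ENNReal.tsum_lt_tsum (i := b) hs
    (Set.indicator_le_indicator_of_subset hst fun _ => zero_le) ?_
  rwa [Set.indicator_of_notMem hbs, Set.indicator_of_mem hbt, pos_iff_ne_zero]

section Decay

variable {f : ℝ → ℝ}

theorem isBoundedUnder_rpow_one_div (hf_pos : ∀ x > (0 : ℝ), 0 < f x)
    (hf_anti : AntitoneOn f (Set.Ioi 0)) :
    IsBoundedUnder (· ≤ ·) atTop fun x => f x ^ (1 / x) := by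
  refine isBoundedUnder_of_eventually_le (a := max 1 (f 1)) ?_
  filter_upwards [eventually_ge_atTop 1] with x hx
  have hx0 : 0 < x := one_pos.trans_le hx
  calc f x ^ (1 / x) ≤ max 1 (f 1) ^ (1 / x) :=
        Real.rpow_le_rpow (hf_pos x hx0).le
          ((hf_anti (Set.mem_Ioi.2 one_pos) (Set.mem_Ioi.2 hx0) hx).trans (le_max_right _ _))
          (by positivity)
    _ ≤ max 1 (f 1) ^ (1 : ℝ) :=
        Real.rpow_le_rpow_of_exponent_le (le_max_left _ _) ((div_le_one hx0).2 hx)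
    _ = max 1 (f 1) := Real.rpow_one _

theorem eventually_le_rpow_of_limsup_lt (hf_pos : ∀ x > (0 : ℝ), 0 < f x)
    (hf_anti : AntitoneOn f (Set.Ioi 0)) {ρ : ℝ}
    (h : limsup (fun x => f x ^ (1 / x)) atTop < ρ) : ∀ᶠ x in atTop, f x ≤ ρ ^ x := by
  filter_upwards [eventually_lt_of_limsup_lt h (isBoundedUnder_rpow_one_div hf_pos hf_anti),
    eventually_gt_atTop 0] with x hx hx0
  have := hf_pos x hx0
  calc f x = (f x ^ (1 / x)) ^ x := by
        rw [← Real.rpow_mul this.le, one_div_mul_cancel hx0.ne', Real.rpow_one]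
    _ ≤ ρ ^ x := Real.rpow_le_rpow (by positivity) hx.le hx0.le

theorem summable_pow_mul_norm_of_eventually_le (hf_pos : ∀ x > (0 : ℝ), 0 < f x) {d ρ θ : ℝ}
    (hd : 0 ≤ d) (hρ : 0 ≤ ρ) (hθ : 0 < θ) (hdecay : ∀ᶠ x in atTop, f x ≤ ρ ^ x)
    (hr : d * ρ ^ θ < 1) : Summable fun n : ℕ => d ^ n * ‖f (θ * n)‖ := by
  refine .of_norm_bounded_eventually_nat (summable_geometric_of_lt_one (by positivity) hr) ?_
  have hθn : Tendsto (fun n : ℕ => θ * n) atTop atTop :=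
    tendsto_natCast_atTop_atTop.const_mul_atTop hθ
  filter_upwards [hθn.eventually hdecay, hθn.eventually_gt_atTop 0] with n hn hn0
  rw [norm_mul, norm_norm, Real.norm_of_nonneg (hf_pos _ hn0).le,
    Real.norm_of_nonneg (by positivity), mul_pow, ← Real.rpow_mul_natCast hρ]
  exact mul_le_mul_of_nonneg_left hn (by positivity)

end Decay

theorem exists_mul_rpow_lt_one {d ρ : ℝ} {k : ℕ} (hk : k ≠ 0) (hd : 0 < d) (hρ : 0 < ρ)
    (h : ρ < 1 / d ^ k) : ∃ θ ∈ Set.Ioo 0 (1 / (k : ℝ)), d * ρ ^ θ < 1 := by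
  have hk' : (0 : ℝ) < 1 / k := by positivity
  have hroot : d * ρ ^ (1 / (k : ℝ)) < 1 :=
    calc d * ρ ^ (1 / (k : ℝ)) < d * (1 / d ^ k) ^ (1 / (k : ℝ)) := by gcongr
      _ = 1 := by
        rw [← one_div_pow, one_div (k : ℝ), Real.pow_rpow_inv_natCast (by positivity) hk,
          mul_one_div_cancel hd.ne']
  have hev : ∀ᶠ θ in 𝓝 (1 / (k : ℝ)), d * ρ ^ θ < 1 :=
    ((Real.continuousAt_const_rpow hρ.ne').const_mul d).eventually_lt_const hroot
  have hIoo : ∀ᶠ θ in 𝓝[<] (1 / (k : ℝ)), θ ∈ Set.Ioo 0 (1 / (k : ℝ)) := Ioo_mem_nhdsLT hk'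
  obtain ⟨θ, hθ, hθ'⟩ := (hIoo.and (hev.filter_mono nhdsWithin_le_nhds)).exists
  exact ⟨θ, hθ, hθ'⟩

namespace McShane

variable {k : ℕ}

theorem convex_simplex : Convex ℝ (simplex k) := by
  intro x hx y hy a b ha hb hab
  refine ⟨fun i => ?_, ?_⟩
  · simp only [Pi.add_apply, Pi.smul_apply, smul_eq_mul]
    rcases ha.eq_or_lt with rfl | ha'
    · simpa [show b = 1 by linarith] using hy.1 i
    · exact add_pos_of_pos_of_nonneg (mul_pos ha' (hx.1 i)) (mul_nonneg hb (hy.1 i).le)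
  · simp [sum_add_distrib, ← mul_sum, hx.2, hy.2, hab]

theorem wlen_nonneg {L : Fin k → ℝ} (hL : 0 ≤ L) (g : FreeGroup (Fin k)) : 0 ≤ wlen L g :=
  List.sum_nonneg (by simpa using fun x _ => hL x)

@[simp]
theorem wlen_add (x y : Fin k → ℝ) (g : FreeGroup (Fin k)) :
    wlen (x + y) g = wlen x g + wlen y g := by
  simp [wlen, List.sum_map_add]

@[simp]
theorem wlen_smul (a : ℝ) (x : Fin k → ℝ) (g : FreeGroup (Fin k)) :
    wlen (a • x) g = a * wlen x g := by
  simp [wlen, List.sum_map_mul_left]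

theorem mul_norm_le_wlen {θ : ℝ} {L : Fin k → ℝ} (hL : ∀ i, θ ≤ L i) (g : FreeGroup (Fin k)) :
    θ * g.norm ≤ wlen L g := by
  have := List.card_nsmul_le_sum ((FreeGroup.toWord g).map fun x => L x.1) θ
    (by simpa using fun x _ => hL x)
  simpa [wlen, FreeGroup.norm, mul_comm] using this

theorem hlen_le_wlen {L : Fin k → ℝ} (hL : 0 ≤ L) {g : FreeGroup (Fin k)}
    {c : ConjClasses (FreeGroup (Fin k))} (hg : ConjClasses.mk g = c) : hlen L c ≤ wlen L g :=
  csInf_le ⟨0, by rintro _ ⟨h, -, rfl⟩; exact wlen_nonneg hL h⟩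
    ⟨g, ConjClasses.mem_carrier_iff_mk_eq.mpr hg, rfl⟩

theorem le_hlen {L : Fin k → ℝ} {r : ℝ} {c : ConjClasses (FreeGroup (Fin k))}
    (h : ∀ g, ConjClasses.mk g = c → r ≤ wlen L g) : r ≤ hlen L c := by
  obtain ⟨g, hg⟩ := ConjClasses.exists_rep c
  refine le_csInf ⟨_, g, ConjClasses.mem_carrier_iff_mk_eq.mpr hg, rfl⟩ ?_
  rintro _ ⟨g, hg, rfl⟩
  exact h g (ConjClasses.mem_carrier_iff_mk_eq.mp hg)

theorem concaveOn_hlen (c : ConjClasses (FreeGroup (Fin k))) :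
    ConcaveOn ℝ (Set.Ici 0) fun L => hlen L c := by
  refine ⟨convex_Ici 0, fun x hx y hy a b ha hb _ => le_hlen fun g hg => ?_⟩
  simp only [smul_eq_mul, wlen_add, wlen_smul]
  gcongr
  exacts [hlen_le_wlen hx hg, hlen_le_wlen hy hg]

theorem le_hlen_of_ne_one {θ : ℝ} (hθ : 0 ≤ θ) {L : Fin k → ℝ} (hL : ∀ i, θ ≤ L i)
    {c : ConjClasses (FreeGroup (Fin k))} (hc : c ≠ 1) : θ ≤ hlen L c := by
  refine le_hlen fun g hg => le_trans ?_ (mul_norm_le_wlen hL g)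
  have : 1 ≤ g.norm := by
    rwa [Nat.one_le_iff_ne_zero, Ne, FreeGroup.norm_eq_zero, ← ConjClasses.mk_eq_one_iff, hg]
  exact le_mul_of_one_le_right hθ (by exact_mod_cast this)

/-- `wlen L` dominates the conjugation-invariant homomorphism `aⱼ ↦ L j` to `ℝ`. -/
theorem le_wlen_of_isConj_of {L : Fin k → ℝ} (hL : 0 ≤ L) {i : Fin k} {g : FreeGroup (Fin k)}
    (hg : IsConj g (FreeGroup.of i)) : L i ≤ wlen L g := by
  let φ := FreeGroup.lift fun j => Multiplicative.ofAdd (L j)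
  have hφ : φ g = Multiplicative.ofAdd (L i) := by
    rw [isConj_iff_eq.mp (φ.map_isConj hg), FreeGroup.lift_apply_of]
  have : Multiplicative.toAdd (φ g) ≤ wlen L g := by
    conv_lhs => rw [← FreeGroup.mk_toWord (x := g)]
    rw [FreeGroup.lift_mk]
    unfold wlen
    induction FreeGroup.toWord g with
    | nil => simp
    | cons x t ih =>
      obtain ⟨j, _ | _⟩ := x
      all_goals
        have : 0 ≤ L j := hL j
        simp only [List.map_cons, List.prod_cons, List.sum_cons, toAdd_mul, cond_true, cond_false,
          toAdd_inv, toAdd_ofAdd]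
        linarith
  simpa [hφ] using this

theorem hlen_mk_of {L : Fin k → ℝ} (hL : 0 ≤ L) (i : Fin k) :
    hlen L (ConjClasses.mk (FreeGroup.of i)) = L i :=
  le_antisymm ((hlen_le_wlen hL rfl).trans_eq (by simp [wlen, FreeGroup.toWord_of]))
    (le_hlen fun _ hg => le_wlen_of_isConj_of hL (ConjClasses.mk_eq_mk_iff_isConj.mp hg))

theorem isPrimitive_of (i : Fin k) : IsPrimitive (FreeGroup.of i) := ⟨MulEquiv.refl _, i, rfl⟩

theorem IsPrimitive.mk_ne_one {g : FreeGroup (Fin k)} (hg : IsPrimitive g) :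
    ConjClasses.mk g ≠ 1 := by
  obtain ⟨e, i, rfl⟩ := hg
  simp [ConjClasses.mk_eq_one_iff]

/-- Reduction mod 2 of the exponent sum of the basis element `e (of i)` separates `e (of i)` from
squares. -/
theorem IsPrimitive.not_isConj_sq {g : FreeGroup (Fin k)} (hg : IsPrimitive g)
    (h : FreeGroup (Fin k)) : ¬IsConj g (h ^ 2) := by
  obtain ⟨e, i, rfl⟩ := hg
  intro hconj
  let χ : FreeGroup (Fin k) →* Multiplicative (ZMod 2) :=
    (FreeGroup.lift fun j => Multiplicative.ofAdd (if j = i then 1 else 0)).comp e.symm.toMonoidHom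
  have hsq : ∀ z : ZMod 2, 2 * z = 0 := by decide
  have := congrArg Multiplicative.toAdd (isConj_iff_eq.mp (χ.map_isConj hconj))
  simp [χ, hsq] at this

variable {f : ℝ → ℝ}

/-- `Cf` and `Pf` are the instances `T = 𝒞_k` and `T = 𝒫_k`. -/
noncomputable def classSum (T : Set (ConjClasses (FreeGroup (Fin k)))) (f : ℝ → ℝ)
    (L : Fin k → ℝ) : ℝ≥0∞ :=
  ∑' c : T, ENNReal.ofReal (f (hlen L c))

variable {T : Set (ConjClasses (FreeGroup (Fin k)))} {θ : ℝ} {L : Fin k → ℝ}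

theorem hlen_pos (hθ : 0 < θ) (hL : ∀ i, θ ≤ L i) (hT : 1 ∉ T) (c : T) : 0 < hlen L c :=
  hθ.trans_le (le_hlen_of_ne_one hθ.le hL (ne_of_mem_of_not_mem c.2 hT))

/-- Compare with the free-group series along a choice of shortest representatives. -/
theorem summable_classSum (hf_pos : ∀ x > (0 : ℝ), 0 < f x)
    (hf_anti : AntitoneOn f (Set.Ioi 0)) (hθ : 0 < θ) (hL : ∀ i, θ ≤ L i) (hT : 1 ∉ T)
    (hsumm : Summable fun g : FreeGroup (Fin k) => f (θ * g.norm)) :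
    Summable fun c : T => f (hlen L c) := by
  choose rep hrep hmin using fun c : T => FreeGroup.exists_shortest_rep c.1
  have hinj : rep.Injective := fun c d h => Subtype.ext ((hrep c).symm.trans (h ▸ hrep d))
  refine .of_nonneg_of_le (fun c => (hf_pos _ (hlen_pos hθ hL hT c)).le) (fun c => ?_)
    (hsumm.comp_injective hinj)
  have hnorm : 1 ≤ (rep c).norm := by
    rw [Nat.one_le_iff_ne_zero, Ne, FreeGroup.norm_eq_zero, ← ConjClasses.mk_eq_one_iff, hrep c]
    exact ne_of_mem_of_not_mem c.2 hT
  refine hf_anti (Set.mem_Ioi.2 (by positivity)) (Set.mem_Ioi.2 (hlen_pos hθ hL hT c)) ?_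
  exact le_hlen fun g hg => (mul_le_mul_of_nonneg_left (by exact_mod_cast hmin c g hg) hθ.le).trans
    (mul_norm_le_wlen hL g)

theorem classSum_lt_top (hf_pos : ∀ x > (0 : ℝ), 0 < f x)
    (hf_anti : AntitoneOn f (Set.Ioi 0)) (hθ : 0 < θ) (hL : ∀ i, θ ≤ L i) (hT : 1 ∉ T)
    (hsumm : Summable fun g : FreeGroup (Fin k) => f (θ * g.norm)) : classSum T f L < ⊤ := by
  rw [classSum, ← ENNReal.ofReal_tsum_of_nonneg (fun c => (hf_pos _ (hlen_pos hθ hL hT c)).le)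
    (summable_classSum hf_pos hf_anti hθ hL hT hsumm)]
  exact ENNReal.ofReal_lt_top

theorem toReal_classSum (hf_pos : ∀ x > (0 : ℝ), 0 < f x) (hθ : 0 < θ) (hL : ∀ i, θ ≤ L i)
    (hT : 1 ∉ T) : (classSum T f L).toReal = ∑' c : T, f (hlen L c) := by
  rw [classSum, ENNReal.tsum_toReal_eq fun _ => ENNReal.ofReal_ne_top]
  exact tsum_congr fun c => ENNReal.toReal_ofReal (hf_pos _ (hlen_pos hθ hL hT c)).le

/-- The summand of a basis element `aᵢ` is `f (L i)`, which is strictly convex along every segment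
on which `L i` varies. -/
theorem strictConvexOn_toReal_classSum (hf_pos : ∀ x > (0 : ℝ), 0 < f x)
    (hf_anti : AntitoneOn f (Set.Ioi 0)) (hf_conv : StrictConvexOn ℝ (Set.Ioi 0) f)
    (hθ : 0 < θ) {U : Set (Fin k → ℝ)} (hU : Convex ℝ U) (hUθ : ∀ L ∈ U, ∀ i, θ ≤ L i)
    (hT : 1 ∉ T) (hbasis : ∀ i, ConjClasses.mk (FreeGroup.of i) ∈ T)
    (hsumm : Summable fun g : FreeGroup (Fin k) => f (θ * g.norm)) :
    StrictConvexOn ℝ U fun L => (classSum T f L).toReal := by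
  have hU0 : U ⊆ Set.Ici 0 := fun L hL i => hθ.le.trans (hUθ L hL i)
  refine (strictConvexOn_tsum hU (fun c => ?_) (fun L hL => ?_) ?_).congr fun L hL =>
    (toReal_classSum hf_pos hθ (hUθ L hL) hT).symm
  · exact hf_conv.convexOn.comp_concaveOn_of_mapsTo hf_anti ((concaveOn_hlen c).subset hU0 hU)
      fun L hL => hlen_pos hθ (hUθ L hL) hT c
  · exact summable_classSum hf_pos hf_anti hθ (hUθ L hL) hT hsumm
  intro x hx y hy hxy
  obtain ⟨i, hi⟩ := Function.ne_iff.mp hxy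
  refine ⟨⟨_, hbasis i⟩, fun a b ha hb hab => ?_⟩
  have hxy0 : a • x + b • y ∈ U := hU hx hy ha.le hb.le hab
  simp only [hlen_mk_of (hU0 hx), hlen_mk_of (hU0 hy), hlen_mk_of (hU0 hxy0)]
  exact hf_conv.2 (hθ.trans_le (hUθ x hx i)) (hθ.trans_le (hUθ y hy i)) hi ha hb hab

theorem zero_lt_Pf_and_Pf_lt_Cf (hf_pos : ∀ x > (0 : ℝ), 0 < f x) (hθ : 0 < θ)
    (hL : ∀ i, θ ≤ L i) (hC : Cf f L ≠ ⊤) (i : Fin k) : 0 < Pf f L ∧ Pf f L < Cf f L := by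
  have hsub : {c | ∃ g, IsPrimitive g ∧ ConjClasses.mk g = c} ⊆
      {c : ConjClasses (FreeGroup (Fin k)) | c ≠ 1} := by
    rintro _ ⟨g, hg, rfl⟩
    exact hg.mk_ne_one
  have hterm : ∀ c ≠ 1, ENNReal.ofReal (f (hlen L c)) ≠ 0 := fun c hc =>
    (ENNReal.ofReal_pos.2 (hf_pos _ (hθ.trans_le (le_hlen_of_ne_one hθ.le hL hc)))).ne'
  have hsq : ConjClasses.mk (FreeGroup.of i ^ 2) ≠ 1 := by
    rw [Ne, ConjClasses.mk_eq_one_iff, ← FreeGroup.norm_eq_zero, FreeGroup.norm_of_pow]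
    norm_num
  have hnotsq : ConjClasses.mk (FreeGroup.of i ^ 2) ∉
      {c | ∃ g, IsPrimitive g ∧ ConjClasses.mk g = c} :=
    fun ⟨g, hg, hmk⟩ => hg.not_isConj_sq _ (ConjClasses.mk_eq_mk_iff_isConj.mp hmk)
  have hof : ConjClasses.mk (FreeGroup.of i) ≠ 1 := (isPrimitive_of i).mk_ne_one
  refine ⟨(pos_iff_ne_zero.2 (hterm _ hof)).trans_le ?_, ?_⟩
  · exact ENNReal.le_tsum (f := fun c : {c // ∃ g, IsPrimitive g ∧ ConjClasses.mk g = c} =>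
      ENNReal.ofReal (f (hlen L c))) ⟨ConjClasses.mk (FreeGroup.of i), _, isPrimitive_of i, rfl⟩
  · have hP : ∑' c : ({c | ∃ g, IsPrimitive g ∧ ConjClasses.mk g = c} :
        Set (ConjClasses (FreeGroup (Fin k)))),
        ENNReal.ofReal (f (hlen L c)) ≠ ⊤ :=
      ne_top_of_le_ne_top hC
        (ENNReal.tsum_mono_subtype (fun c => ENNReal.ofReal (f (hlen L c))) hsub)
    exact ENNReal.tsum_subtype_lt_tsum_subtype (fun c => ENNReal.ofReal (f (hlen L c))) hsub hsq
      hnotsq (hterm _ hsq) hP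

theorem exists_summable_comp_norm (hk : 1 ≤ k) (hf_pos : ∀ x > (0 : ℝ), 0 < f x)
    (hf_anti : AntitoneOn f (Set.Ioi 0))
    (hf_limsup : limsup (fun x : ℝ => f x ^ (1 / x)) atTop < 1 / (2 * (k : ℝ) - 1) ^ k) :
    ∃ θ ∈ Set.Ioo 0 (1 / (k : ℝ)), Summable fun g : FreeGroup (Fin k) => f (θ * g.norm) := by
  have : Nonempty (Fin k) := ⟨⟨0, hk⟩⟩
  have hd : (0 : ℝ) < 2 * k - 1 := by
    have : (1 : ℝ) ≤ k := by exact_mod_cast hk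
    linarith
  obtain ⟨ρ, hρ, hρB⟩ := exists_between (max_lt hf_limsup (by positivity))
  have hρ0 : 0 < ρ := (le_max_right _ _).trans_lt hρ
  obtain ⟨θ, hθ, hr⟩ := exists_mul_rpow_lt_one (by omega) hd hρ0 hρB
  have hdecay := eventually_le_rpow_of_limsup_lt hf_pos hf_anti ((le_max_left _ _).trans_lt hρ)
  refine ⟨θ, hθ, FreeGroup.summable_comp_norm (F := fun n => f (θ * n)) ?_⟩
  simpa using summable_pow_mul_norm_of_eventually_le hf_pos hd.le hρ0.le hθ.1 hdecay hr

/-- Theorem C: if `f` is positive, monotone decreasing, strictly convex on `(0,∞)` and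
`limsup_{x→∞} f(x)^{1/x} < 1/(2k-1)^k`, then there is a convex neighborhood `U` of `ℒ*`
in `Δ_k` with `0 < P_f < C_f < ∞` on `U` on which both `C_f` and `P_f` are strictly
convex; in particular neither is constant on `U`. -/
theorem mcshane_stmt5 (k : ℕ) (hk : 2 ≤ k) (f : ℝ → ℝ)
    (hf_pos : ∀ x > (0:ℝ), 0 < f x)
    (hf_anti : StrictAntiOn f (Set.Ioi 0))
    (hf_conv : StrictConvexOn ℝ (Set.Ioi 0) f)
    (hf_limsup : limsup (fun x : ℝ => f x ^ (1 / x)) atTop < 1 / (2 * (k:ℝ) - 1) ^ k) :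
    ∃ U ⊆ simplex k, Convex ℝ U ∧ U ∈ 𝓝[simplex k] (Lstar k) ∧
      (∀ L ∈ U, 0 < Pf f L ∧ Pf f L < Cf f L ∧ Cf f L < ⊤) ∧
      StrictConvexOn ℝ U (fun L => (Cf f L).toReal) ∧
      StrictConvexOn ℝ U (fun L => (Pf f L).toReal) := by
  obtain ⟨θ, ⟨hθ, hθk⟩, hsumm⟩ :=
    exists_summable_comp_norm (by omega) hf_pos hf_anti.antitoneOn hf_limsup
  set U := simplex k ∩ Set.univ.pi fun _ => Set.Ioi θ
  have hUθ : ∀ L ∈ U, ∀ i, θ ≤ L i := fun L hL i => (hL.2 i (Set.mem_univ i)).le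
  have hU : Convex ℝ U := convex_simplex.inter (convex_pi fun _ _ => convex_Ioi θ)
  have hC : ∀ L ∈ U, Cf f L < ⊤ := fun L hL =>
    classSum_lt_top (T := {c | c ≠ 1}) hf_pos hf_anti.antitoneOn hθ (hUθ L hL) (by simp) hsumm
  refine ⟨U, Set.inter_subset_left, hU,
    inter_mem_nhdsWithin _ (set_pi_mem_nhds Set.finite_univ fun _ _ => Ioi_mem_nhds hθk),
    fun L hL => (zero_lt_Pf_and_Pf_lt_Cf hf_pos hθ (hUθ L hL) (hC L hL).ne ⟨0, by omega⟩).imp_right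
      fun h => ⟨h, hC L hL⟩, ?_, ?_⟩
  · exact strictConvexOn_toReal_classSum (T := {c | c ≠ 1}) hf_pos hf_anti.antitoneOn hf_conv hθ
      hU hUθ (by simp) (fun i => (isPrimitive_of i).mk_ne_one) hsumm
  · exact strictConvexOn_toReal_classSum (T := {c | ∃ g, IsPrimitive g ∧ ConjClasses.mk g = c})
      hf_pos hf_anti.antitoneOn hf_conv hθ hU hUθ (fun ⟨_, hg, hmk⟩ => hg.mk_ne_one hmk)
      (fun i => ⟨_, isPrimitive_of i, rfl⟩) hsumm

end McShane
end

section
/- Let k ≥ 2 and for t ∈ (0, 1/(k−1)) let ℒ_t = (t, t, …, t, 1−(k−1)t) ∈ Δ_k be the volume-one metric structure assigning length t to a_1, …, a_{k−1} and length 1−(k−1)t to a_k. Then the volume entropy satisfies lim_{t→0} h_{ℒ_t} = ∞. -/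
open Filter Topology
open scoped ENNReal

namespace McShane

/-- The volume entropy of a metric structure `L` on the wedge of `k` circles.
For positive edge lengths the `limsup` below is in fact a limit. -/
noncomputable def entropy {k : ℕ} (L : Fin k → ℝ) : ℝ :=
  limsup (fun R : ℝ =>
    Real.log (Nat.card {g : FreeGroup (Fin k) // wlen L g ≤ R}) / R) atTop

/-!
The letter `a₁` has length `t` and `aₖ` has length at most `1`, so the `⌈1/t⌉^m` distinct positive
words `a₁^{s₁} aₖ a₁^{s₂} aₖ ⋯ a₁^{sₘ} aₖ` with `0 ≤ sᵢ < ⌈1/t⌉` all have length at most `2m`.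
Hence the ball of radius `R` contains at least `(1/t)^{⌊R/2⌋}` elements and `h_{ℒ_t} ≥ log(1/t)/4`.
Since the entropy is a `limsup` of reals, this also needs the growth rate to be bounded above,
which holds because an element of length at most `R` is a reduced word of at most `R/ε` letters,
`ε` being the shortest edge.
-/

section BlockWord

variable {α : Type*} (a b : α)

def blockWord (l : List ℕ) : List α :=
  l.flatMap fun j => List.replicate j a ++ [b]

@[simp]
lemma blockWord_nil : blockWord a b [] = [] := rfl

@[simp]
lemma blockWord_cons (j : ℕ) (l : List ℕ) :
    blockWord a b (j :: l) = List.replicate j a ++ b :: blockWord a b l := by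
  simp [blockWord]

lemma mem_blockWord {l : List ℕ} {x : α} (hx : x ∈ blockWord a b l) : x = a ∨ x = b := by
  simp only [blockWord, List.mem_flatMap, List.mem_append, List.mem_replicate,
    List.mem_singleton] at hx
  obtain ⟨_, _, ⟨_, rfl⟩ | rfl⟩ := hx <;> simp

lemma sum_map_blockWord {M : Type*} [NonAssocSemiring M] (f : α → M) (l : List ℕ) :
    ((blockWord a b l).map f).sum = l.sum * f a + l.length * f b := by
  induction l with
  | nil => simp
  | cons j l ih =>
    simp only [blockWord_cons, List.map_append, List.map_replicate, List.map_cons,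
      List.sum_append, List.sum_replicate, List.sum_cons, ih, List.length_cons, nsmul_eq_mul,
      Nat.cast_add, Nat.cast_one, add_mul, one_mul]
    abel

variable {a b} [BEq α] [LawfulBEq α]

lemma splitOn_blockWord (hab : a ≠ b) (l : List ℕ) :
    (blockWord a b l).splitOn b = l.map (List.replicate · a) ++ [[]] := by
  induction l with
  | nil => simp
  | cons j l ih =>
    rw [blockWord_cons, List.splitOn_append_cons_self_of_not_mem (by simp [hab.symm]), ih]
    simp

lemma blockWord_injective (hab : a ≠ b) : Function.Injective (blockWord a b) := by
  intro l l' h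
  have h' := congrArg (List.splitOn b) h
  rw [splitOn_blockWord hab, splitOn_blockWord hab, List.append_cancel_right_eq] at h'
  exact List.map_injective_iff.mpr (List.replicate_left_injective a) h'

end BlockWord

lemma toWord_mk_of_forall_snd {α : Type*} [DecidableEq α] {w : List (α × Bool)}
    (hw : ∀ x ∈ w, x.2 = true) : (FreeGroup.mk w).toWord = w := by
  have hred : FreeGroup.IsReduced w := by
    unfold FreeGroup.IsReduced
    exact (List.pairwise_of_forall_mem_list
      fun x hx y hy (_ : x.1 = y.1) => (hw x hx).trans (hw y hy).symm).isChain
  rw [FreeGroup.toWord_mk, hred.reduce_eq]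

section Ball

variable {k : ℕ} {L : Fin k → ℝ} {ε : ℝ}

lemma length_toWord_mul_le_wlen (hL : ∀ i, ε ≤ L i) (g : FreeGroup (Fin k)) :
    (FreeGroup.toWord g).length * ε ≤ wlen L g := by
  simpa [wlen] using List.card_nsmul_le_sum ((FreeGroup.toWord g).map fun x => L x.1) ε
    (by simp only [List.mem_map]; rintro _ ⟨x, _, rfl⟩; exact hL x.1)

lemma length_toWord_le_of_wlen_le (hε : 0 < ε) (hL : ∀ i, ε ≤ L i) {R : ℝ}
    {g : FreeGroup (Fin k)} (hg : wlen L g ≤ R) : (FreeGroup.toWord g).length ≤ ⌈R / ε⌉₊ := by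
  have h : ((FreeGroup.toWord g).length : ℝ) ≤ R / ε :=
    (le_div_iff₀ hε).mpr ((length_toWord_mul_le_wlen hL g).trans hg)
  exact_mod_cast h.trans (Nat.le_ceil _)

lemma injective_getElem?_toWord (hε : 0 < ε) (hL : ∀ i, ε ≤ L i) (R : ℝ) :
    Function.Injective fun g : {g : FreeGroup (Fin k) // wlen L g ≤ R} =>
      fun i : Fin (⌈R / ε⌉₊ + 1) => (FreeGroup.toWord g.1)[(i : ℕ)]? := by
  intro g g' h
  refine Subtype.ext (FreeGroup.toWord_injective (List.ext_getElem? fun n => ?_))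
  by_cases hn : n < ⌈R / ε⌉₊ + 1
  · exact congrFun h ⟨n, hn⟩
  · have := length_toWord_le_of_wlen_le hε hL g.2
    have := length_toWord_le_of_wlen_le hε hL g'.2
    rw [List.getElem?_eq_none (by omega), List.getElem?_eq_none (by omega)]

lemma finite_wlen_le (hε : 0 < ε) (hL : ∀ i, ε ≤ L i) (R : ℝ) :
    Finite {g : FreeGroup (Fin k) // wlen L g ≤ R} :=
  Finite.of_injective _ (injective_getElem?_toWord hε hL R)

lemma card_wlen_le_le (hε : 0 < ε) (hL : ∀ i, ε ≤ L i) (R : ℝ) :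
    Nat.card {g : FreeGroup (Fin k) // wlen L g ≤ R} ≤ (2 * k + 1) ^ (⌈R / ε⌉₊ + 1) :=
  (Nat.card_le_card_of_injective _ (injective_getElem?_toWord hε hL R)).trans_eq
    (by simp [Nat.card_eq_fintype_card, mul_comm])

lemma one_le_card_wlen_le (hε : 0 < ε) (hL : ∀ i, ε ≤ L i) {R : ℝ} (hR : 0 ≤ R) :
    1 ≤ Nat.card {g : FreeGroup (Fin k) // wlen L g ≤ R} := by
  have := finite_wlen_le hε hL R
  have : Nonempty {g : FreeGroup (Fin k) // wlen L g ≤ R} := ⟨⟨1, by simpa [wlen] using hR⟩⟩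
  exact Nat.card_pos

lemma isBoundedUnder_log_card_wlen_le_div (hε : 0 < ε) (hL : ∀ i, ε ≤ L i) :
    IsBoundedUnder (· ≤ ·) atTop fun R : ℝ =>
      Real.log (Nat.card {g : FreeGroup (Fin k) // wlen L g ≤ R}) / R := by
  refine isBoundedUnder_of_eventually_le (a := (1 / ε + 2) * Real.log (2 * k + 1)) ?_
  filter_upwards [eventually_ge_atTop (1 : ℝ)] with R hR
  have hlog : 0 ≤ Real.log (2 * k + 1) := Real.log_nonneg (by linarith [k.cast_nonneg (α := ℝ)])
  have hceil : (⌈R / ε⌉₊ : ℝ) + 1 ≤ (1 / ε + 2) * R := by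
    have := Nat.ceil_lt_add_one (div_nonneg (by linarith : 0 ≤ R) hε.le)
    have : R / ε = 1 / ε * R := by ring
    linarith
  have hcard : Real.log (Nat.card {g : FreeGroup (Fin k) // wlen L g ≤ R}) ≤
      (⌈R / ε⌉₊ + 1) * Real.log (2 * k + 1) := by
    calc Real.log (Nat.card {g : FreeGroup (Fin k) // wlen L g ≤ R})
        ≤ Real.log (((2 * k + 1) ^ (⌈R / ε⌉₊ + 1) : ℕ) : ℝ) := by
          gcongr
          · exact_mod_cast one_le_card_wlen_le hε hL (by linarith)
          · exact_mod_cast card_wlen_le_le hε hL R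
      _ = (⌈R / ε⌉₊ + 1) * Real.log (2 * k + 1) := by push_cast [Real.log_pow]; ring
  rw [div_le_iff₀ (by linarith)]
  nlinarith

end Ball

section LowerBound

variable {k : ℕ} {L : Fin k → ℝ} {a b : Fin k}

/-- The words `a^{s₁} b a^{s₂} b ⋯ a^{sₘ} b` with all `sᵢ < q` are distinct and have length at
most `m ((q - 1) L a + L b)`. -/
lemma pow_le_card_wlen_le (hab : a ≠ b) (ha : 0 ≤ L a) {q m : ℕ} {R : ℝ}
    (hR : m * ((q - 1) * L a + L b) ≤ R) [Finite {g : FreeGroup (Fin k) // wlen L g ≤ R}] :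
    q ^ m ≤ Nat.card {g : FreeGroup (Fin k) // wlen L g ≤ R} := by
  let word (s : Fin m → Fin q) : List (Fin k × Bool) :=
    blockWord (a, true) (b, true) (List.ofFn fun i => (s i : ℕ))
  have hpos (s) : ∀ x ∈ word s, x.2 = true := fun x hx => by
    rcases mem_blockWord _ _ hx with rfl | rfl <;> rfl
  have hwlen (s) : wlen L (FreeGroup.mk (word s)) ≤ R := by
    have hsum : ((List.ofFn fun i => (s i : ℕ)).sum : ℝ) ≤ m * (q - 1) := by
      rw [List.sum_ofFn, Nat.cast_sum]
      calc ∑ i, ((s i : ℕ) : ℝ) ≤ ∑ _i : Fin m, ((q : ℝ) - 1) :=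
            Finset.sum_le_sum fun i _ => by
              have : ((s i : ℕ) : ℝ) + 1 ≤ q := by exact_mod_cast (s i).is_lt
              linarith
        _ = m * (q - 1) := by simp [mul_sub]
    rw [wlen, toWord_mk_of_forall_snd (hpos s), sum_map_blockWord, List.length_ofFn]
    nlinarith [mul_le_mul_of_nonneg_right hsum ha]
  have hinj : Function.Injective fun s => (⟨_, hwlen s⟩ : {g // wlen L g ≤ R}) := by
    intro s s' h
    have h' := congrArg (fun g => FreeGroup.toWord g.1) h
    simp only [toWord_mk_of_forall_snd (hpos _)] at h'
    funext i
    exact Fin.val_injective (congrFun (List.ofFn_injective (blockWord_injective (by simpa) h')) i)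
  simpa [Nat.card_fun] using Nat.card_le_card_of_injective _ hinj

variable {ε : ℝ}

/-- Take `q = ⌈1 / L a⌉₊` and `m = ⌊R / 2⌋₊` in `pow_le_card_wlen_le`. -/
lemma mul_log_inv_le_log_card_wlen_le (hε : 0 < ε) (hL : ∀ i, ε ≤ L i) (hab : a ≠ b)
    (ha : L a ≤ 1) (hb : L b ≤ 1) {R : ℝ} (hR : 4 ≤ R) :
    R / 4 * Real.log (1 / L a) ≤ Real.log (Nat.card {g : FreeGroup (Fin k) // wlen L g ≤ R}) := by
  have ha0 : 0 < L a := hε.trans_le (hL a)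
  have := finite_wlen_le hε hL R
  set q := ⌈1 / L a⌉₊
  set m := ⌊R / 2⌋₊
  have hq : (q - 1) * L a ≤ 1 :=
    (le_div_iff₀ ha0).mp (by linarith [Nat.ceil_lt_add_one (one_div_pos.mpr ha0).le])
  have hm : (m : ℝ) * 2 ≤ R := by linarith [Nat.floor_le (a := R / 2) (by linarith)]
  have hm' : R / 4 ≤ m := by linarith [Nat.sub_one_lt_floor (R / 2)]
  have hcard : (1 / L a) ^ m ≤ Nat.card {g : FreeGroup (Fin k) // wlen L g ≤ R} :=
    calc (1 / L a) ^ m ≤ (q : ℝ) ^ m := by gcongr; exact Nat.le_ceil _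
      _ ≤ _ := by
        exact_mod_cast pow_le_card_wlen_le hab ha0.le (by nlinarith [Nat.cast_nonneg (α := ℝ) m])
  calc R / 4 * Real.log (1 / L a) ≤ m * Real.log (1 / L a) := by
        gcongr
        exact Real.log_nonneg (by rw [le_div_iff₀ ha0]; linarith)
    _ = Real.log ((1 / L a) ^ m) := by rw [Real.log_pow]
    _ ≤ _ := Real.log_le_log (by positivity) hcard

lemma log_inv_div_four_le_entropy (hε : 0 < ε) (hL : ∀ i, ε ≤ L i) (hab : a ≠ b)
    (ha : L a ≤ 1) (hb : L b ≤ 1) : Real.log (1 / L a) / 4 ≤ entropy L := by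
  refine le_limsup_of_frequently_le (Eventually.frequently ?_)
    (isBoundedUnder_log_card_wlen_le_div hε hL)
  filter_upwards [eventually_ge_atTop (4 : ℝ)] with R hR
  rw [div_le_div_iff₀ (by norm_num) (by linarith)]
  linarith [mul_log_inv_le_log_card_wlen_le hε hL hab ha hb hR]

end LowerBound

/-- For `ℒ_t = (t, …, t, 1−(k−1)t) ∈ Δ_k`, the volume entropy `h_{ℒ_t}` tends
to `∞` as `t → 0⁺`. -/
theorem mcshane_stmt8 (k : ℕ) (hk : 2 ≤ k) :
    Tendsto (fun t : ℝ => entropy (fun i : Fin k =>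
        if (i : ℕ) < k - 1 then t else 1 - ((k : ℝ) - 1) * t))
      (𝓝[Set.Ioo (0:ℝ) (1 / ((k : ℝ) - 1))] 0) atTop := by
  have hlog : Tendsto (fun t : ℝ => Real.log (1 / t) / 4)
      (𝓝[Set.Ioo (0:ℝ) (1 / ((k : ℝ) - 1))] 0) atTop := by
    refine Tendsto.atTop_div_const (by norm_num) ?_
    simpa only [one_div, Real.log_inv, Function.comp_def] using tendsto_neg_atBot_atTop.comp
      (Real.tendsto_log_nhdsGT_zero.mono_left (nhdsWithin_mono 0 Set.Ioo_subset_Ioi_self))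
  refine tendsto_atTop_mono' _ ?_ hlog
  filter_upwards [self_mem_nhdsWithin] with t ⟨ht0, htk⟩
  have hk1 : (1 : ℝ) ≤ k - 1 := by
    have : (2 : ℝ) ≤ k := by exact_mod_cast hk
    linarith
  have hβ : 0 < 1 - ((k : ℝ) - 1) * t := by
    rw [lt_div_iff₀ (by linarith)] at htk
    linarith
  have ht1 : t ≤ 1 := by nlinarith
  have hpos : 0 < k - 1 := by omega
  have key := log_inv_div_four_le_entropy (lt_min ht0 hβ)
    (L := fun i : Fin k => if (i : ℕ) < k - 1 then t else 1 - ((k : ℝ) - 1) * t)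
    (a := ⟨0, by omega⟩) (b := ⟨k - 1, by omega⟩) (fun i => by split_ifs <;> simp)
    (Fin.ne_of_val_ne hpos.ne) (by simpa [hpos]) (by simp only [lt_self_iff_false, ↓reduceIte]; nlinarith)
  simpa [hpos] using key

end McShane
end

section
/- Let k ≥ 2 and let F_{k−1} = F(a_1, …, a_{k−1}) be the subgroup of F_k = F(a_1, …, a_k) generated by a_1, …, a_{k−1}. Then for every g ∈ F_{k−1} the element g·a_k is a primitive element of F_k, and if g_1 ≠ g_2 are distinct elements of F_{k−1} then g_1·a_k and g_2·a_k are not conjugate in F_k. -/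
open Filter Topology
open scoped ENNReal

namespace McShane

/-- For every `g` in the subgroup `F_{k−1} = ⟨a_1, …, a_{k−1}⟩` of `F_k`, the element
`g·a_k` is primitive in `F_k`, and distinct `g₁ ≠ g₂` in `F_{k−1}` give non-conjugate
elements `g₁·a_k`, `g₂·a_k`. -/
theorem mcshane_stmt11 (k : ℕ) (hk : 2 ≤ k) :
    let ak : FreeGroup (Fin k) := FreeGroup.of ⟨k - 1, by omega⟩
    let S : Subgroup (FreeGroup (Fin k)) :=
      Subgroup.closure {x | ∃ i : Fin k, (i : ℕ) < k - 1 ∧ x = FreeGroup.of i}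
    (∀ g ∈ S, IsPrimitive (g * ak)) ∧
    (∀ g₁ ∈ S, ∀ g₂ ∈ S, g₁ ≠ g₂ → ¬ IsConj (g₁ * ak) (g₂ * ak)) := by
  intro ak S
  have hak_def : ak = FreeGroup.of ⟨k - 1, by omega⟩ := rfl
  set φ : FreeGroup (Fin k) → FreeGroup (Fin k) →* FreeGroup (Fin k) :=
    fun t => FreeGroup.lift (fun i : Fin k => if (i : ℕ) = k - 1 then t else FreeGroup.of i)
    with hφ
  have key : ∀ (t g : FreeGroup (Fin k)), g ∈ S → φ t g = g := by
    intro t g hg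
    induction hg using Subgroup.closure_induction with
    | mem x hx =>
        obtain ⟨i, hi, rfl⟩ := hx
        simp only [hφ, FreeGroup.lift_apply_of, if_neg (by omega : ¬ (i : ℕ) = k - 1)]
    | one => simp
    | mul x y _ _ hx hy => rw [map_mul, hx, hy]
    | inv x _ hx => rw [map_inv, hx]
  have hakt : ∀ t : FreeGroup (Fin k), φ t ak = t := by
    intro t
    rw [hak_def, hφ]
    simp [FreeGroup.lift_apply_of]
  constructor
  · intro g hg
    refine ⟨MonoidHom.toMulEquiv (φ (g * ak)) (φ (g⁻¹ * ak)) ?_ ?_, ⟨k - 1, by omega⟩, ?_⟩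
    · apply FreeGroup.ext_hom
      intro i
      by_cases h : (i : ℕ) = k - 1
      · have hi : FreeGroup.of i = ak := by rw [hak_def]; congr 1; exact Fin.ext h
        rw [MonoidHom.comp_apply, hi, hakt, map_mul, key _ g hg, hakt]
        simp
      · simp only [MonoidHom.comp_apply, hφ, FreeGroup.lift_apply_of, if_neg h, MonoidHom.id_apply]
    · apply FreeGroup.ext_hom
      intro i
      by_cases h : (i : ℕ) = k - 1
      · have hi : FreeGroup.of i = ak := by rw [hak_def]; congr 1; exact Fin.ext h
        rw [MonoidHom.comp_apply, hi, hakt, map_mul, map_inv, key _ g hg, hakt]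
        simp
      · simp only [MonoidHom.comp_apply, hφ, FreeGroup.lift_apply_of, if_neg h, MonoidHom.id_apply]
    · show φ (g * ak) (FreeGroup.of ⟨k - 1, by omega⟩) = g * ak
      rw [← hak_def, hakt]
  · intro g₁ h₁ g₂ h₂ hne hc
    obtain ⟨c, hc⟩ := isConj_iff.mp hc
    have := congrArg (φ g₁⁻¹) hc
    rw [map_mul, map_mul, map_mul, map_mul, map_inv, key _ g₁ h₁, key _ g₂ h₂,
      hakt, mul_inv_cancel] at this
    apply hne
    have : g₂ * g₁⁻¹ = 1 := by
      rw [← this]; group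
    have := mul_inv_eq_one.mp this
    exact this.symm


end McShane
end

section
/- Let k ≥ 2 and let ℒ be a metric structure on the wedge of k circles. Let 𝒵_k be the set of root-free nontrivial conjugacy classes of F_k, i.e. conjugacy classes of nontrivial elements that are not proper powers. Then the limit h̃_ℒ = lim_{R→∞} (1/R)·log #{w ∈ 𝒵_k : ℓ_ℒ(w) ≤ R} exists and equals the volume entropy h_ℒ of ℒ. -/
/-!
Every conjugacy class of `F_k` contains a cyclically reduced word, unique up to rotation, whose
weight is the length `ℓ_ℒ` of the class: any other representative reads `s c' s⁻¹` with `c'` a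
rotation of it. Let `N(R)` count elements of weight `≤ R` and `T(R)` classes of length `≤ R`.
Then `T(R) ≤ N(R)`; conversely, with two generators at hand every reduced word closes up by one
letter to a cyclically reduced word, which is determined by its class and a rotation, so
`N(R - max ℒ) ≤ (R / min ℒ + 1) T(R)`. A class that is not root-free is the class of `u^n` with
`n ≥ 2` and `u` of weight `≤ R / 2`, so there are at most `(R / min ℒ + 1) N(R / 2)` of them.
Positive words give `N(n max ℒ) ≥ 2^n`, hence `h_ℒ > 0`, so `N(R / 2)` is exponentially
negligible against `N(R - max ℒ)` and the root-free classes grow at the full rate `h_ℒ`.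
-/

open Filter Topology
open scoped ENNReal

namespace McShane

/-- A nontrivial element is root-free if it is not a proper power. -/
def IsRootFree {k : ℕ} (g : FreeGroup (Fin k)) : Prop :=
  g ≠ 1 ∧ ∀ (h : FreeGroup (Fin k)) (n : ℕ), 2 ≤ n → g ≠ h ^ n

end McShane

namespace FreeGroup

variable {α : Type*} {l c w s l₁ l₂ : List (α × Bool)}

theorem isCyclicallyReduced_append_comm :
    IsCyclicallyReduced (l₁ ++ l₂) → IsCyclicallyReduced (l₂ ++ l₁) := by
  rcases eq_or_ne l₁ [] with rfl | h₁
  · simp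
  rcases eq_or_ne l₂ [] with rfl | h₂
  · simp
  rintro ⟨hred, hcyc⟩
  obtain ⟨hr₁, hr₂, hjoin⟩ := List.isChain_append.mp hred
  refine ⟨List.isChain_append.mpr ⟨hr₂, hr₁, fun a ha b hb => hcyc a ?_ b ?_⟩,
    fun a ha b hb => hjoin a ?_ b ?_⟩
  · rwa [List.getLast?_append_of_ne_nil _ h₂]
  · rwa [List.head?_append_of_ne_nil _ h₁]
  · rwa [List.getLast?_append_of_ne_nil _ h₁] at ha
  · rwa [List.head?_append_of_ne_nil _ h₂] at hb

theorem IsCyclicallyReduced.rotate (h : IsCyclicallyReduced l) (n : ℕ) :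
    IsCyclicallyReduced (l.rotate n) := by
  rw [List.rotate_eq_drop_append_take_mod]
  apply isCyclicallyReduced_append_comm
  rwa [List.take_append_drop]

theorem mk_cons (a : α × Bool) (l : List (α × Bool)) : mk (a :: l) = mk [a] * mk l := by
  rw [mul_mk]
  rfl

theorem mk_inv_letter (a : α × Bool) : mk [(a.1, !a.2)] = (mk [a])⁻¹ := by
  simp [inv_mk, invRev]

theorem invRev_cons_letter (a : α × Bool) (l : List (α × Bool)) :
    invRev (a :: l) = invRev l ++ [(a.1, !a.2)] := by
  simp [invRev]

theorem IsReduced.cons_append_singleton {a b : α × Bool} (h : IsReduced l) (hl : l ≠ [])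
    (ha : ∀ x ∈ l.head?, a.1 = x.1 → a.2 = x.2) (hb : ∀ x ∈ l.getLast?, x.1 = b.1 → x.2 = b.2) :
    IsReduced (a :: (l ++ [b])) :=
  List.isChain_cons.mpr ⟨by rwa [List.head?_append_of_ne_nil _ hl],
    List.isChain_append.mpr ⟨h, List.isChain_singleton b, fun x hx y hy => by
      simp only [List.head?_cons, Option.mem_def, Option.some.injEq] at hy
      exact hy ▸ hb x hx⟩⟩

/-- Two generators give three candidate letters, and at most two of them cancel `a` or `b`. -/
theorem exists_letter_not_cancel {a₀ a₁ : α} (h01 : a₀ ≠ a₁) (a b : α × Bool) :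
    ∃ y : α × Bool, (y.1 = a₀ ∨ y.1 = a₁) ∧ (a.1 = y.1 → a.2 = y.2) ∧ (y.1 = b.1 → y.2 = b.2) := by
  by_cases h : a.1 = a₀ ∧ b.1 = a₀ ∧ a.2 ≠ b.2
  · exact ⟨(a₁, true), by grind⟩
  by_cases hb : b.1 = a₀
  · exact ⟨(a₀, b.2), by grind⟩
  · exact ⟨(a₀, a.2), by grind⟩

theorem IsReduced.exists_isCyclicallyReduced_append {a₀ a₁ : α} (h01 : a₀ ≠ a₁)
    (hw : IsReduced w) :
    ∃ y : α × Bool, (y.1 = a₀ ∨ y.1 = a₁) ∧ IsCyclicallyReduced (w ++ [y]) := by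
  obtain ⟨y, hy, hlast, hhead⟩ :=
    exists_letter_not_cancel h01 (w.getLast?.getD (a₀, true)) (w.head?.getD (a₀, true))
  refine ⟨y, hy, List.isChain_append.mpr ⟨hw, List.isChain_singleton y, ?_⟩, ?_⟩
  · intro a ha b hb
    rw [Option.mem_def] at ha
    simp_all
  · intro a ha b hb
    rw [List.getLast?_concat, Option.mem_def, Option.some_inj] at ha
    subst ha
    cases w with
    | nil => simp_all
    | cons x w => simp_all

variable [DecidableEq α]

theorem IsReduced.toWord_eq {g : FreeGroup α} (h : IsReduced l) (hg : g = mk l) :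
    g.toWord = l := by
  rw [hg, toWord_mk, h.reduce_eq]

theorem IsReduced.toWord_mk (h : IsReduced l) : (mk l).toWord = l :=
  h.toWord_eq rfl

theorem IsReduced.toWord_conj_letter {x : α × Bool} (hw : IsReduced w) (hw0 : w ≠ [])
    (hh : w.head? ≠ some (x.1, !x.2)) (hl : w.getLast? ≠ some x) :
    (mk [x] * mk w * (mk [x])⁻¹).toWord = x :: (w ++ [(x.1, !x.2)]) := by
  have hhead : ∀ b ∈ w.head?, x.1 = b.1 → x.2 = b.2 := by
    rintro b hb hxb
    rw [Option.mem_def] at hb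
    obtain ⟨x, _ | _⟩ := x <;> obtain ⟨b, _ | _⟩ := b <;> simp_all
  have hlast : ∀ a ∈ w.getLast?, a.1 = x.1 → a.2 = !x.2 := by
    rintro a ha hax
    rw [Option.mem_def] at ha
    obtain ⟨x, _ | _⟩ := x <;> obtain ⟨a, _ | _⟩ := a <;> simp_all
  refine (hw.cons_append_singleton hw0 hhead hlast).toWord_eq ?_
  rw [mk_cons _ (w ++ _), ← mul_mk, mk_inv_letter, mul_assoc]

theorem IsCyclicallyReduced.exists_toWord_conj_letter (hc : IsCyclicallyReduced c) (hc0 : c ≠ [])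
    (x : α × Bool) :
    ∃ s r, (mk [x] * mk c * (mk [x])⁻¹).toWord = s ++ c.rotate r ++ invRev s := by
  by_cases hh : c.head? = some (x.1, !x.2)
  · obtain ⟨d, rfl⟩ := List.head?_eq_some_iff.mp hh
    have hrot : ((x.1, !x.2) :: d).rotate 1 = d ++ [(x.1, !x.2)] := by
      simp [List.rotate_cons_succ]
    refine ⟨[], 1, ?_⟩
    rw [hrot, invRev_empty, List.nil_append, List.append_nil]
    refine (hrot ▸ (hc.rotate 1).isReduced).toWord_eq ?_
    rw [mk_cons _ d, ← mul_mk, mk_inv_letter]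
    group
  by_cases hl : c.getLast? = some x
  · obtain ⟨d, rfl⟩ : ∃ d, c = d ++ [x] := ⟨_, (List.dropLast_append_getLast? x hl).symm⟩
    have hrot := List.rotate_append_length_eq d [x]
    refine ⟨[], d.length, ?_⟩
    rw [hrot, invRev_empty, List.nil_append, List.append_nil]
    refine (hrot ▸ (hc.rotate d.length).isReduced).toWord_eq ?_
    rw [← mul_mk, List.singleton_append, mk_cons _ d]
    group
  · refine ⟨[x], 0, ?_⟩
    rw [hc.isReduced.toWord_conj_letter hc0 hh hl]
    simp [invRev]

theorem IsCyclicallyReduced.exists_toWord_conj_letter_of_isReduced (hc : IsCyclicallyReduced c)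
    (hc0 : c ≠ []) (hw : IsReduced (s ++ c ++ invRev s)) (x : α × Bool) :
    ∃ s' r, (mk [x] * mk (s ++ c ++ invRev s) * (mk [x])⁻¹).toWord
      = s' ++ c.rotate r ++ invRev s' := by
  rcases s with _ | ⟨y, s⟩
  · simpa using hc.exists_toWord_conj_letter hc0 x
  by_cases hy : y = (x.1, !x.2)
  · subst hy
    have hword : (x.1, !x.2) :: s ++ c ++ invRev ((x.1, !x.2) :: s)
        = (x.1, !x.2) :: (s ++ c ++ invRev s ++ [x]) := by
      simp [invRev_cons_letter]
    rw [hword] at hw ⊢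
    refine ⟨s, 0, (hw.infix ⟨[(x.1, !x.2)], [x], by simp⟩).toWord_eq ?_⟩
    rw [List.rotate_zero, mk_cons _ (_ ++ [x]), ← mul_mk (L₂ := [x]), mk_inv_letter]
    group
  · refine ⟨x :: y :: s, 0, ?_⟩
    rw [hw.toWord_conj_letter (by simp) (by simpa using hy) ?_]
    · simp [invRev_cons_letter]
    · simp only [invRev_cons_letter, List.cons_append, List.append_assoc, List.getLast?_cons,
        List.getLast?_append]
      rintro ⟨⟩
      simp at hy

theorem IsCyclicallyReduced.exists_toWord_conj (hc : IsCyclicallyReduced c) (u : FreeGroup α) :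
    ∃ s r, (u * mk c * u⁻¹).toWord = s ++ c.rotate r ++ invRev s := by
  rcases eq_or_ne c [] with rfl | hc0
  · exact ⟨[], 0, by simp [← one_eq_mk]⟩
  obtain ⟨l, rfl⟩ : ∃ l, u = mk l := ⟨_, mk_toWord.symm⟩
  induction l with
  | nil => exact ⟨[], 0, by simpa [← one_eq_mk] using hc.isReduced.toWord_mk⟩
  | cons x l ih =>
    obtain ⟨s, r, hsr⟩ := ih
    have hconj : mk (x :: l) * mk c * (mk (x :: l))⁻¹
        = mk [x] * mk (s ++ c.rotate r ++ invRev s) * (mk [x])⁻¹ := by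
      rw [← hsr, mk_toWord, mk_cons x l]
      group
    have hw : IsReduced (s ++ c.rotate r ++ invRev s) := hsr ▸ isReduced_toWord
    obtain ⟨s', r', h⟩ :=
      (hc.rotate r).exists_toWord_conj_letter_of_isReduced (by simpa using hc0) hw x
    exact ⟨s', r + r', by rw [hconj, h, List.rotate_rotate]⟩

theorem IsCyclicallyReduced.exists_eq_rotate_of_isConj (h₁ : IsCyclicallyReduced l₁)
    (h₂ : IsCyclicallyReduced l₂) (h : IsConj (mk l₁) (mk l₂)) : ∃ r, l₂ = l₁.rotate r := by
  obtain ⟨u, hu⟩ := isConj_iff.mp h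
  obtain ⟨s, r, hsr⟩ := h₁.exists_toWord_conj u
  rw [hu, h₂.isReduced.toWord_mk] at hsr
  rcases s with _ | ⟨a, s⟩
  · exact ⟨r, by simpa using hsr⟩
  -- otherwise `l₂` would begin with `a` and end with its inverse
  · have := h₂.2 (a.1, !a.2)
      (by simp [hsr, invRev_cons_letter, List.getLast?_cons, List.getLast?_append]) a
      (by simp [hsr])
    simp at this

theorem exists_isCyclicallyReduced_isConj (g : FreeGroup α) :
    ∃ l, IsCyclicallyReduced l ∧ IsConj g (mk l) := by
  refine ⟨reduceCyclically g.toWord, reduceCyclically.isCyclicallyReduced isReduced_toWord,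
    (isConj_iff.mpr ⟨mk (reduceCyclically.conjugator g.toWord), ?_⟩).symm⟩
  rw [inv_mk, mul_mk, mul_mk, reduceCyclically.conj_conjugator_reduceCyclically, mk_toWord]

theorem exists_isCyclicallyReduced_mk_eq (c : ConjClasses (FreeGroup α)) :
    ∃ l, IsCyclicallyReduced l ∧ ConjClasses.mk (mk l) = c := by
  obtain ⟨g, rfl⟩ := ConjClasses.mk_surjective c
  obtain ⟨l, hl, hg⟩ := exists_isCyclicallyReduced_isConj g
  exact ⟨l, hl, ConjClasses.mk_eq_mk_iff_isConj.mpr hg.symm⟩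

end FreeGroup

namespace McShane

open FreeGroup

section WordWeight

variable {α : Type*} (L : α → ℝ)

def wordWeight (l : List (α × Bool)) : ℝ := (l.map fun x => L x.1).sum

@[simp] theorem wordWeight_nil : wordWeight L [] = 0 := rfl

@[simp] theorem wordWeight_singleton (x : α × Bool) : wordWeight L [x] = L x.1 := by
  simp [wordWeight]

@[simp] theorem wordWeight_append (l₁ l₂ : List (α × Bool)) :
    wordWeight L (l₁ ++ l₂) = wordWeight L l₁ + wordWeight L l₂ := by
  simp [wordWeight]

@[simp] theorem wordWeight_invRev (l : List (α × Bool)) :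
    wordWeight L (invRev l) = wordWeight L l := by
  simp [wordWeight, invRev, Function.comp_def]

@[simp] theorem wordWeight_rotate (l : List (α × Bool)) (n : ℕ) :
    wordWeight L (l.rotate n) = wordWeight L l :=
  ((l.rotate_perm n).map _).sum_eq

@[simp] theorem wordWeight_flatten_replicate (l : List (α × Bool)) (n : ℕ) :
    wordWeight L (List.replicate n l).flatten = n * wordWeight L l := by
  induction n with
  | zero => simp
  | succ n ih =>
    rw [List.replicate_succ, List.flatten_cons, wordWeight_append, ih]
    push_cast
    ring

variable {L}

theorem wordWeight_nonneg (hL : ∀ i, 0 ≤ L i) (l : List (α × Bool)) : 0 ≤ wordWeight L l :=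
  List.sum_nonneg (by simp [hL])

theorem mul_length_le_wordWeight {m : ℝ} (hmL : ∀ i, m ≤ L i) (l : List (α × Bool)) :
    m * l.length ≤ wordWeight L l := by
  simpa [wordWeight, mul_comm] using
    List.card_nsmul_le_sum (l.map fun x => L x.1) m (by simp [hmL])

theorem wordWeight_le_mul_length {M : ℝ} (hLM : ∀ i, L i ≤ M) (l : List (α × Bool)) :
    wordWeight L l ≤ M * l.length := by
  simpa [wordWeight, mul_comm] using
    List.sum_le_card_nsmul (l.map fun x => L x.1) M (by simp [hLM])

theorem length_le_floor_of_wordWeight_le {m R : ℝ} (hm : 0 < m) (hmL : ∀ i, m ≤ L i)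
    {l : List (α × Bool)} (hl : wordWeight L l ≤ R) : l.length ≤ ⌊R / m⌋₊ :=
  Nat.le_floor ((le_div_iff₀ hm).2 (by linarith [mul_length_le_wordWeight hmL l]))

end WordWeight

section Counting

variable {k : ℕ} {L : Fin k → ℝ} {m M R : ℝ}

theorem wlen_eq_wordWeight (g : FreeGroup (Fin k)) : wlen L g = wordWeight L g.toWord := rfl

theorem wlen_mk_of_isReduced {l : List (Fin k × Bool)} (hl : IsReduced l) :
    wlen L (mk l) = wordWeight L l := by
  rw [wlen_eq_wordWeight, hl.toWord_mk]

theorem hlen_mk_of_isCyclicallyReduced (hL : ∀ i, 0 ≤ L i) {l : List (Fin k × Bool)}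
    (hl : IsCyclicallyReduced l) : hlen L (ConjClasses.mk (mk l)) = wordWeight L l := by
  refine IsLeast.csInf_eq ⟨⟨mk l, ConjClasses.mem_carrier_iff_mk_eq.mpr rfl,
    wlen_mk_of_isReduced hl.isReduced⟩, ?_⟩
  rintro _ ⟨g, hg, rfl⟩
  obtain ⟨u, rfl⟩ := isConj_iff.mp
    (ConjClasses.mk_eq_mk_iff_isConj.mp (ConjClasses.mem_carrier_iff_mk_eq.mp hg).symm)
  obtain ⟨s, r, h⟩ := hl.exists_toWord_conj u
  rw [wlen_eq_wordWeight, h, wordWeight_append, wordWeight_append, wordWeight_invRev,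
    wordWeight_rotate]
  linarith [wordWeight_nonneg hL s]

theorem hlen_mk_pow (hL : ∀ i, 0 ≤ L i) {l : List (Fin k × Bool)} (hl : IsCyclicallyReduced l)
    (n : ℕ) : hlen L (ConjClasses.mk (mk l ^ n)) = n * wordWeight L l := by
  rw [pow_mk, hlen_mk_of_isCyclicallyReduced hL (hl.flatten_replicate n),
    wordWeight_flatten_replicate]

theorem exists_isCyclicallyReduced_pow_of_not_rootFree {c : ConjClasses (FreeGroup (Fin k))}
    (hc : ¬∃ g, ConjClasses.mk g = c ∧ IsRootFree g) :
    ∃ l n, IsCyclicallyReduced l ∧ 2 ≤ n ∧ ConjClasses.mk (mk l ^ n) = c := by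
  obtain ⟨g, rfl⟩ := ConjClasses.mk_surjective c
  obtain ⟨h, n, hn, rfl⟩ : ∃ h n, 2 ≤ n ∧ g = h ^ n := by
    by_cases hg : g = 1
    · exact ⟨1, 2, le_rfl, by rw [hg, one_pow]⟩
    by_contra! hpow
    exact hc ⟨g, rfl, hg, hpow⟩
  obtain ⟨l, hl, hconj⟩ := exists_isCyclicallyReduced_isConj h
  exact ⟨l, n, hl, hn, ConjClasses.mk_eq_mk_iff_isConj.mpr (hconj.pow n).symm⟩

theorem finite_setOf_wlen_le (hm : 0 < m) (hmL : ∀ i, m ≤ L i) (R : ℝ) :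
    {g : FreeGroup (Fin k) | wlen L g ≤ R}.Finite :=
  ((List.finite_length_le _ ⌊R / m⌋₊).image mk).subset fun g hg =>
    ⟨g.toWord, length_le_floor_of_wordWeight_le hm hmL hg, mk_toWord⟩

theorem setOf_hlen_le_subset_image (hL : ∀ i, 0 ≤ L i) (R : ℝ) :
    {c | hlen L c ≤ R} ⊆ ConjClasses.mk '' {g : FreeGroup (Fin k) | wlen L g ≤ R} := by
  intro c hc
  obtain ⟨l, hl, rfl⟩ := exists_isCyclicallyReduced_mk_eq c
  refine ⟨mk l, ?_, rfl⟩
  rwa [Set.mem_ofPred_eq, wlen_mk_of_isReduced hl.isReduced, ← hlen_mk_of_isCyclicallyReduced hL hl]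

theorem finite_setOf_hlen_le (hm : 0 < m) (hmL : ∀ i, m ≤ L i) (R : ℝ) :
    {c : ConjClasses (FreeGroup (Fin k)) | hlen L c ≤ R}.Finite :=
  ((finite_setOf_wlen_le hm hmL R).image _).subset
    (setOf_hlen_le_subset_image (fun i => hm.le.trans (hmL i)) R)

theorem card_image_prod_Iic_le {β γ : Type*} {s : Set β} (hs : s.Finite) (f : β × ℕ → γ)
    (n : ℕ) : Nat.card ↥(f '' (s ×ˢ Set.Iic n)) ≤ (n + 1) * Nat.card s := by
  calc Nat.card ↥(f '' (s ×ˢ Set.Iic n)) ≤ Nat.card ↥(s ×ˢ Set.Iic n) :=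
        Nat.card_image_le (hs.prod (Set.finite_Iic n))
    _ = (n + 1) * Nat.card s := by
        rw [Nat.card_congr (Equiv.Set.prod _ _), Nat.card_prod, mul_comm]
        simp

theorem card_hlen_le_le_card_wlen_le (hm : 0 < m) (hmL : ∀ i, m ≤ L i)
    (P : ConjClasses (FreeGroup (Fin k)) → Prop) (R : ℝ) :
    Nat.card {c // P c ∧ hlen L c ≤ R} ≤ Nat.card {g : FreeGroup (Fin k) // wlen L g ≤ R} :=
  calc Nat.card {c // P c ∧ hlen L c ≤ R}
      ≤ Nat.card ↥(ConjClasses.mk '' {g : FreeGroup (Fin k) | wlen L g ≤ R}) :=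
        Nat.card_mono ((finite_setOf_wlen_le hm hmL R).image _)
          fun _ hc => setOf_hlen_le_subset_image (fun i => hm.le.trans (hmL i)) R hc.2
    _ ≤ _ := Nat.card_image_le (finite_setOf_wlen_le hm hmL R)

theorem card_wlen_le_sub_le_mul_card_hlen_le (hk : 2 ≤ k) (hm : 0 < m) (hmL : ∀ i, m ≤ L i)
    (hLM : ∀ i, L i ≤ M) (R : ℝ) :
    Nat.card {g : FreeGroup (Fin k) // wlen L g ≤ R - M}
      ≤ (⌊R / m⌋₊ + 1) * Nat.card {c : ConjClasses (FreeGroup (Fin k)) // hlen L c ≤ R} := by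
  have hL : ∀ i, 0 ≤ L i := fun i => hm.le.trans (hmL i)
  choose rep hrep hrepc using exists_isCyclicallyReduced_mk_eq (α := Fin k)
  have hsub : {g | wlen L g ≤ R - M} ⊆
      (fun p : ConjClasses (FreeGroup (Fin k)) × ℕ => mk ((rep p.1).rotate p.2).dropLast) ''
        ({c | hlen L c ≤ R} ×ˢ Set.Iic ⌊R / m⌋₊) := by
    intro g hg
    -- `g` is recovered from the cyclic representative of the class of `g y` and a rotation
    obtain ⟨y, -, hcyc⟩ := (isReduced_toWord (x := g)).exists_isCyclicallyReduced_append
      (show (⟨0, by omega⟩ : Fin k) ≠ ⟨1, by omega⟩ by simp)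
    set c := ConjClasses.mk (mk (g.toWord ++ [y]))
    have hc : hlen L c ≤ R := by
      rw [hlen_mk_of_isCyclicallyReduced hL hcyc, wordWeight_append, wordWeight_singleton]
      linarith [hLM y.1, show wordWeight L g.toWord ≤ R - M from hg]
    obtain ⟨r, hr⟩ := (hrep c).exists_eq_rotate_of_isConj hcyc
      (ConjClasses.mk_eq_mk_iff_isConj.mp (hrepc c))
    have hlen : (rep c).length ≤ ⌊R / m⌋₊ := length_le_floor_of_wordWeight_le hm hmL
      (by rwa [← hlen_mk_of_isCyclicallyReduced hL (hrep c), hrepc])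
    have hpos : 0 < (rep c).length := by
      rw [List.length_pos_iff]
      rintro h0
      simp [h0] at hr
    refine ⟨(c, r % (rep c).length), ⟨hc, (Nat.mod_lt _ hpos).le.trans hlen⟩, ?_⟩
    simp only [List.rotate_mod, ← hr, List.dropLast_concat, mk_toWord]
  calc Nat.card {g : FreeGroup (Fin k) // wlen L g ≤ R - M}
      ≤ Nat.card ↥((fun p : ConjClasses (FreeGroup (Fin k)) × ℕ =>
          mk ((rep p.1).rotate p.2).dropLast) '' ({c | hlen L c ≤ R} ×ˢ Set.Iic ⌊R / m⌋₊)) :=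
        Nat.card_mono (((finite_setOf_hlen_le hm hmL R).prod (Set.finite_Iic _)).image _) hsub
    _ ≤ _ := card_image_prod_Iic_le (finite_setOf_hlen_le hm hmL R) _ _

theorem exists_pow_eq_of_not_rootFree (hm : 0 < m) (hmL : ∀ i, m ≤ L i)
    {c : ConjClasses (FreeGroup (Fin k))} (hc : ¬∃ g, ConjClasses.mk g = c ∧ IsRootFree g)
    (hcR : hlen L c ≤ R) :
    ∃ g n, wlen L g ≤ R / 2 ∧ n ≤ ⌊R / m⌋₊ ∧ ConjClasses.mk (g ^ n) = c := by
  have hL : ∀ i, 0 ≤ L i := fun i => hm.le.trans (hmL i)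
  obtain ⟨l, n, hl, hn, rfl⟩ := exists_isCyclicallyReduced_pow_of_not_rootFree hc
  have hR : n * wordWeight L l ≤ R := (hlen_mk_pow hL hl n).symm.trans_le hcR
  have hn' : (2 : ℝ) ≤ n := by exact_mod_cast hn
  rcases eq_or_ne l [] with rfl | hl0
  · refine ⟨1, 0, ?_, Nat.zero_le _, by simp [← one_eq_mk]⟩
    simp only [wordWeight_nil, mul_zero] at hR
    simp only [wlen_eq_wordWeight, toWord_one, wordWeight_nil]
    linarith
  · have hmw : m ≤ wordWeight L l := by
      have : (1 : ℝ) ≤ l.length := by exact_mod_cast List.length_pos_iff.mpr hl0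
      nlinarith [mul_length_le_wordWeight hmL l]
    refine ⟨mk l, n, ?_, Nat.le_floor ((le_div_iff₀ hm).2 (by nlinarith)), rfl⟩
    rw [wlen_mk_of_isReduced hl.isReduced]
    nlinarith [wordWeight_nonneg hL l]

theorem card_hlen_le_le_card_rootFree_add (hm : 0 < m) (hmL : ∀ i, m ≤ L i) (R : ℝ) :
    Nat.card {c : ConjClasses (FreeGroup (Fin k)) // hlen L c ≤ R}
      ≤ Nat.card {c : ConjClasses (FreeGroup (Fin k)) //
          (∃ g, ConjClasses.mk g = c ∧ IsRootFree g) ∧ hlen L c ≤ R}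
        + (⌊R / m⌋₊ + 1) * Nat.card {g : FreeGroup (Fin k) // wlen L g ≤ R / 2} := by
  set A := {c : ConjClasses (FreeGroup (Fin k)) |
    (∃ g, ConjClasses.mk g = c ∧ IsRootFree g) ∧ hlen L c ≤ R}
  set B := (fun p : FreeGroup (Fin k) × ℕ => ConjClasses.mk (p.1 ^ p.2)) ''
    ({g | wlen L g ≤ R / 2} ×ˢ Set.Iic ⌊R / m⌋₊)
  have hsub : {c | hlen L c ≤ R} ⊆ A ∪ B := by
    intro c hc
    by_cases hrf : ∃ g, ConjClasses.mk g = c ∧ IsRootFree g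
    · exact Or.inl ⟨hrf, hc⟩
    obtain ⟨g, n, hg, hn, rfl⟩ := exists_pow_eq_of_not_rootFree hm hmL hrf hc
    exact Or.inr ⟨(g, n), ⟨hg, hn⟩, rfl⟩
  have hA : A.Finite := (finite_setOf_hlen_le hm hmL R).subset fun c hc => hc.2
  have hB : B.Finite := ((finite_setOf_wlen_le hm hmL _).prod (Set.finite_Iic _)).image _
  calc Nat.card {c : ConjClasses (FreeGroup (Fin k)) // hlen L c ≤ R}
      ≤ Nat.card ↥(A ∪ B) := Nat.card_mono (hA.union hB) hsub
    _ ≤ Nat.card A + Nat.card B := Set.card_union_le A B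
    _ ≤ _ := Nat.add_le_add_left (card_image_prod_Iic_le (finite_setOf_wlen_le hm hmL _) _ _) _

theorem two_pow_le_card_wlen_le (hk : 2 ≤ k) (hm : 0 < m) (hmL : ∀ i, m ≤ L i)
    (hLM : ∀ i, L i ≤ M) (n : ℕ) :
    2 ^ n ≤ Nat.card {g : FreeGroup (Fin k) // wlen L g ≤ n * M} := by
  let a : Bool → Fin k × Bool := fun b => (if b then ⟨0, by omega⟩ else ⟨1, by omega⟩, true)
  have ha : a.Injective := by
    intro b b' h
    cases b <;> cases b' <;> simp_all [a]
  let word : (Fin n → Bool) → List (Fin k × Bool) := fun b => List.ofFn (a ∘ b)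
  have hword : ∀ b, IsReduced (word b) := fun b =>
    (List.pairwise_of_forall_mem_list fun x hx y hy _ => by
      obtain ⟨i, rfl⟩ := List.mem_ofFn.mp hx
      obtain ⟨j, rfl⟩ := List.mem_ofFn.mp hy
      rfl).isChain
  have hwlen : ∀ b, wlen L (mk (word b)) ≤ n * M := fun b => by
    rw [wlen_mk_of_isReduced (hword b)]
    simpa [mul_comm, word] using wordWeight_le_mul_length hLM (word b)
  have : Finite {g : FreeGroup (Fin k) // wlen L g ≤ n * M} :=
    (finite_setOf_wlen_le hm hmL _).to_subtype
  calc 2 ^ n = Nat.card (Fin n → Bool) := by simp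
    _ ≤ _ := Nat.card_le_card_of_injective (fun b => ⟨mk (word b), hwlen b⟩) fun b b' h => by
        have := congrArg (toWord ∘ Subtype.val) h
        simp only [Function.comp_apply, (hword _).toWord_mk] at this
        exact (ha.comp_left).eq_iff.mp (List.ofFn_injective this)

end Counting

section GrowthRate

def HasGrowthRate (f : ℝ → ℝ) (a : ℝ) : Prop :=
  Tendsto (fun R => Real.log (f R) / R) atTop (𝓝 a)

theorem hasGrowthRate_const (c : ℝ) : HasGrowthRate (fun _ => c) 0 :=
  tendsto_const_nhds.div_atTop tendsto_id

theorem hasGrowthRate_id : HasGrowthRate id 0 :=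
  Real.isLittleO_log_id_atTop.tendsto_div_nhds_zero

namespace HasGrowthRate

variable {f g u : ℝ → ℝ} {a b : ℝ}

theorem mul (hf : HasGrowthRate f a) (hg : HasGrowthRate g b) (hf0 : ∀ᶠ R in atTop, f R ≠ 0)
    (hg0 : ∀ᶠ R in atTop, g R ≠ 0) : HasGrowthRate (fun R => f R * g R) (a + b) :=
  (hf.add hg).congr' <| by
    filter_upwards [hf0, hg0] with R h₁ h₂
    rw [Real.log_mul h₁ h₂, add_div]

theorem inv (hf : HasGrowthRate f a) : HasGrowthRate (fun R => (f R)⁻¹) (-a) := by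
  simpa only [HasGrowthRate, Real.log_inv, neg_div] using hf.neg

theorem comp_tendsto (hf : HasGrowthRate f a) {φ : ℝ → ℝ} (hφ : Tendsto φ atTop atTop) {t : ℝ}
    (hφt : Tendsto (fun R => φ R / R) atTop (𝓝 t)) :
    HasGrowthRate (fun R => f (φ R)) (a * t) :=
  ((hf.comp hφ).mul hφt).congr' <| by
    filter_upwards [hφ.eventually_ne_atTop 0] with R hR
    simp only [Function.comp_apply]
    field_simp

theorem comp_sub_const (hf : HasGrowthRate f a) (c : ℝ) :
    HasGrowthRate (fun R => f (R - c)) a := by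
  have hφt : Tendsto (fun R : ℝ => (R - c) / R) atTop (𝓝 1) := by
    have : Tendsto (fun R : ℝ => 1 - c / R) atTop (𝓝 (1 - 0)) :=
      tendsto_const_nhds.sub (tendsto_const_nhds.div_atTop tendsto_id)
    rw [sub_zero] at this
    refine this.congr' ?_
    filter_upwards [eventually_ne_atTop 0] with R hR
    field_simp
  simpa [← sub_eq_add_neg] using
    hf.comp_tendsto (tendsto_atTop_add_const_right _ (-c) tendsto_id) hφt

theorem comp_div_const (hf : HasGrowthRate f a) {t : ℝ} (ht : 0 < t) :
    HasGrowthRate (fun R => f (R / t)) (a / t) := by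
  have hφt : Tendsto (fun R : ℝ => R / t / R) atTop (𝓝 t⁻¹) :=
    tendsto_const_nhds.congr' <| by
      filter_upwards [eventually_ne_atTop 0] with R hR
      field_simp
  simpa [div_eq_mul_inv] using hf.comp_tendsto (tendsto_id.atTop_div_const ht) hφt

theorem of_le_of_le (hf : HasGrowthRate f a) (hg : HasGrowthRate g a)
    (hf0 : ∀ᶠ R in atTop, 0 < f R) (hfu : ∀ᶠ R in atTop, f R ≤ u R)
    (hug : ∀ᶠ R in atTop, u R ≤ g R) : HasGrowthRate u a := by
  refine tendsto_of_tendsto_of_tendsto_of_le_of_le' hf hg ?_ ?_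
  · filter_upwards [hf0, hfu, eventually_gt_atTop 0] with R h0 h hR
    exact div_le_div_of_nonneg_right (Real.log_le_log h0 h) hR.le
  · filter_upwards [hf0, hfu, hug, eventually_gt_atTop 0] with R h0 h h' hR
    exact div_le_div_of_nonneg_right (Real.log_le_log (h0.trans_le h) h') hR.le

theorem eventually_lt (hf : HasGrowthRate f a) (hg : HasGrowthRate g b) (hab : a < b)
    (hf0 : ∀ᶠ R in atTop, 0 < f R) (hg0 : ∀ᶠ R in atTop, 0 < g R) :
    ∀ᶠ R in atTop, f R < g R := by
  filter_upwards [(hg.sub hf).eventually (eventually_gt_nhds (sub_pos.2 hab)), hf0, hg0,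
    eventually_gt_atTop 0] with R h h₀ h₀' hR
  rw [← sub_div, div_pos_iff_of_pos_right hR, sub_pos] at h
  exact (Real.log_lt_log_iff h₀ h₀').mp h

theorem eventually_one_lt (hf : HasGrowthRate f a) (ha : 0 < a) (hf0 : ∀ R, 0 ≤ f R) :
    ∀ᶠ R in atTop, 1 < f R := by
  filter_upwards [hf.eventually (eventually_gt_nhds ha), eventually_gt_atTop 0] with R h hR
  exact (Real.log_pos_iff (hf0 R)).mp ((div_pos_iff_of_pos_right hR).mp h)

theorem log_two_div_le (hf : HasGrowthRate f a) {M : ℝ} (hM : 0 < M)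
    (h2 : ∀ n : ℕ, 2 ^ n ≤ f (n * M)) : Real.log 2 / M ≤ a := by
  refine ge_of_tendsto (hf.comp (tendsto_natCast_atTop_atTop.atTop_mul_const hM)) ?_
  filter_upwards [eventually_gt_atTop 0] with n hn
  have hn' : (0 : ℝ) < n := by exact_mod_cast hn
  calc Real.log 2 / M = Real.log (2 ^ n) / (n * M) := by
        rw [Real.log_pow]; field_simp
    _ ≤ Real.log (f (n * M)) / (n * M) := by
        gcongr
        exact h2 n

end HasGrowthRate

theorem hasGrowthRate_natFloor_div_add_one {m : ℝ} (hm : 0 < m) :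
    HasGrowthRate (fun R => ((⌊R / m⌋₊ + 1 : ℕ) : ℝ)) 0 := by
  have hupper : HasGrowthRate (fun R => id R * (m⁻¹ + 1)) 0 := by
    simpa using hasGrowthRate_id.mul (hasGrowthRate_const (m⁻¹ + 1)) (eventually_ne_atTop 0)
      (Eventually.of_forall fun _ => by positivity)
  refine (hasGrowthRate_const 1).of_le_of_le hupper (Eventually.of_forall fun _ => one_pos)
    (Eventually.of_forall fun R => by simp) ?_
  filter_upwards [eventually_ge_atTop 1] with R hR
  have := Nat.floor_le (div_nonneg (zero_le_one.trans hR) hm.le)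
  push_cast
  rw [id, mul_add, ← div_eq_mul_inv, mul_one]
  linarith

theorem hasGrowthRate_of_counting {N Z T P : ℝ → ℕ} {h M : ℝ}
    (hN : HasGrowthRate (fun R => (N R : ℝ)) h) (hh : 0 < h)
    (hP : HasGrowthRate (fun R => (P R : ℝ)) 0) (hP0 : ∀ R, 0 < P R)
    (hZN : ∀ R, Z R ≤ N R) (hNT : ∀ R, N (R - M) ≤ P R * T R)
    (hTZ : ∀ R, T R ≤ Z R + P R * N (R / 2)) :
    HasGrowthRate (fun R => (Z R : ℝ)) h := by
  have hNsub := hN.comp_sub_const M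
  have hNhalf := hN.comp_div_const two_pos
  have hNsub0 : ∀ᶠ R in atTop, 0 < N (R - M) :=
    (hNsub.eventually_one_lt hh fun _ => Nat.cast_nonneg _).mono fun _ h =>
      Nat.cast_pos.mp (zero_lt_one.trans h)
  have hNhalf0 : ∀ᶠ R in atTop, 0 < N (R / 2) :=
    (hNhalf.eventually_one_lt (half_pos hh) fun _ => Nat.cast_nonneg _).mono fun _ h =>
      Nat.cast_pos.mp (zero_lt_one.trans h)
  -- `N (R / 2)` grows at rate `h / 2 < h`, so it stays negligible even after multiplication
  -- by `P R ^ 2`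
  have hsmall : ∀ᶠ R in atTop, (P R : ℝ) * (P R * N (R / 2)) < (N (R - M) : ℝ) * 2⁻¹ := by
    refine (hP.mul (hP.mul hNhalf ?_ ?_) ?_ ?_).eventually_lt
      (hNsub.mul (hasGrowthRate_const _) ?_ ?_) (by linarith) ?_ ?_
    all_goals filter_upwards [hNsub0, hNhalf0] with R h₁ h₂
    all_goals have := hP0 R
    all_goals positivity
  have hlower : HasGrowthRate (fun R => (N (R - M) : ℝ) * (2 * (P R : ℝ))⁻¹) h := by
    convert hNsub.mul ((hasGrowthRate_const 2).mul hP ?_ ?_).inv ?_ ?_ using 1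
    · ring
    all_goals filter_upwards [hNsub0] with R h₁
    all_goals have := hP0 R
    all_goals positivity
  refine hlower.of_le_of_le hN ?_ ?_ (Eventually.of_forall fun R => by exact_mod_cast hZN R)
  · filter_upwards [hNsub0] with R h₁
    have := hP0 R
    positivity
  · filter_upwards [hsmall] with R hs
    have h₁ : (N (R - M) : ℝ) ≤ P R * (Z R + P R * N (R / 2)) := by
      exact_mod_cast (hNT R).trans (Nat.mul_le_mul_left _ (hTZ R))
    have := hP0 R
    rw [← div_eq_mul_inv, div_le_iff₀ (by positivity)]
    nlinarith

end GrowthRate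

/-- Remark 4.2: for a metric structure `L` with volume entropy `h`, the exponential
growth rate of root-free nontrivial conjugacy classes exists and equals `h`. -/
theorem mcshane_stmt16 (k : ℕ) (hk : 2 ≤ k) (L : Fin k → ℝ) (hL : ∀ i, 0 < L i)
    (h : ℝ)
    (hent : Tendsto (fun R : ℝ =>
        Real.log (Nat.card {g : FreeGroup (Fin k) // wlen L g ≤ R}) / R) atTop (𝓝 h)) :
    Tendsto (fun R : ℝ =>
        Real.log (Nat.card {c : ConjClasses (FreeGroup (Fin k)) //
          (∃ g, ConjClasses.mk g = c ∧ IsRootFree g) ∧ hlen L c ≤ R}) / R)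
      atTop (𝓝 h) := by
  have : Nonempty (Fin k) := ⟨⟨0, by omega⟩⟩
  obtain ⟨i₀, hmin⟩ := Finite.exists_min L
  obtain ⟨i₁, hmax⟩ := Finite.exists_max L
  have hh : 0 < h := (div_pos (Real.log_pos one_lt_two) (hL i₁)).trans_le
    (HasGrowthRate.log_two_div_le hent (hL i₁) fun n => by
      exact_mod_cast two_pow_le_card_wlen_le hk (hL i₀) hmin hmax n)
  exact hasGrowthRate_of_counting hent hh (hasGrowthRate_natFloor_div_add_one (hL i₀))
    (fun _ => Nat.succ_pos _) (card_hlen_le_le_card_wlen_le (hL i₀) hmin _)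
    (card_wlen_le_sub_le_mul_card_hlen_le hk (hL i₀) hmin hmax)
    (card_hlen_le_le_card_rootFree_add (hL i₀) hmin)

end McShane
end
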